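/- arXiv:2605.26373 — 9 statements merged into one kernel-verified Lean document; each statement's English description precedes it below -/
import Mathlib

section
/- Under Assumptions (A1) and (A2), suppose y_t = q(x_t), let g_t ∈ ℝ^d be any vector with ‖g_t‖ ≤ Ĝ_F, and set g̃_t = J_q(x_t)^{−⊤} g_t. Define the updates y_{t+1} = argmin_{y∈Y} { g̃_tᵀ(y − y_t) + (1/η) D_R(y‖y_t) } and x_{t+1} = argmin_{x∈X} { g_tᵀ(x − x_t) + (1/(2η)) ‖x − x_t‖₂² }. Then ‖y_{t+1} − q(x_{t+1})‖₂ ≤ G⁵ (5 Ĝ_F² + Ĝ_F³ η) η². -/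
open scoped RealInnerProductSpace


/-- Bregman divergence `D_R(x ‖ y) = R x - R y - ⟪∇R y, x - y⟫`. -/
noncomputable def bregman {E : Type*} [NormedAddCommGroup E] [InnerProductSpace ℝ E]
    [CompleteSpace E] (R : E → ℝ) (x y : E) : ℝ :=
  R x - R y - ⟪gradient R y, x - y⟫

/-- If `0 ≤ s*b + s^2*c` for all small positive `s`, then `0 ≤ b`. -/
lemma aux_pos (b c : ℝ) (hc : 0 ≤ c) (h : ∀ s : ℝ, 0 < s → s ≤ 1 → 0 ≤ s * b + s ^ 2 * c) :
    0 ≤ b := by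
  by_contra hb
  push_neg at hb
  have hbpos : 0 < -b := by linarith
  set s : ℝ := min 1 (-b / (2 * (c + 1))) with hs
  have hs0 : 0 < s := lt_min one_pos (by positivity)
  have hs1 : s ≤ 1 := min_le_left _ _
  have hs2 : s ≤ -b / (2 * (c + 1)) := min_le_right _ _
  have hcp : (0:ℝ) < 2 * (c + 1) := by positivity
  have h2 : s * (2 * (c + 1)) ≤ -b := by
    calc s * (2 * (c+1)) ≤ (-b / (2*(c+1))) * (2*(c+1)) := by nlinarith
    _ = -b := by field_simp
  have := h s hs0 hs1
  nlinarith [sq_nonneg s, mul_pos hs0 hs0]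

lemma aux_sq_le (r K : ℝ) (hr : 0 ≤ r) (hK : 0 ≤ K) (h : r ^ 2 ≤ K * r) : r ≤ K := by
  rcases eq_or_lt_of_le hr with h0 | h0
  · linarith
  · nlinarith

/-- Second-order Taylor bound with the sharp 1/2 factor, on a convex set. -/
lemma half_taylor {E : Type*} [NormedAddCommGroup E] [InnerProductSpace ℝ E]
    {f : E → E} {f' : E → E →L[ℝ] E} {s : Set E} (hs : Convex ℝ s)
    (hf : ∀ x ∈ s, HasFDerivAt f (f' x) x) {M : ℝ} (hM : 0 ≤ M)
    (hlip : ∀ x ∈ s, ∀ y ∈ s, ‖f' x - f' y‖ ≤ M * ‖x - y‖)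
    {a b : E} (ha : a ∈ s) (hb : b ∈ s) :
    ‖f b - f a - f' a (b - a)‖ ≤ M / 2 * ‖b - a‖ ^ 2 := by
  set v := b - a with hv
  set u := f b - f a - f' a v with hu
  by_cases hu0 : u = 0
  · rw [hu0]; simp; positivity
  have hun : 0 < ‖u‖ := norm_pos_iff.mpr hu0
  set w := ‖u‖⁻¹ • u with hw
  have hwn : ‖w‖ = 1 := by
    rw [hw, norm_smul, norm_inv, norm_norm, inv_mul_cancel₀ (ne_of_gt hun)]
  have hmem : ∀ t ∈ Set.Icc (0:ℝ) 1, a + t • v ∈ s := fun t ht =>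
    hs.add_smul_sub_mem ha hb ht
  set φ : ℝ → ℝ := fun t => ⟪w, f (a + t • v) - f a - t • (f' a v)⟫ with hφdef
  set ψ : ℝ → ℝ := fun t => φ t - M / 2 * t ^ 2 * ‖v‖ ^ 2 with hψdef
  have hψd : ∀ t ∈ Set.Icc (0:ℝ) 1,
      HasDerivAt ψ (⟪w, (f' (a + t • v)) v - f' a v⟫ - M * t * ‖v‖ ^ 2) t := by
    intro t ht
    have h1 : HasDerivAt (fun t : ℝ => a + t • v) v t := by
      simpa using ((hasDerivAt_id t).smul_const v).const_add a
    have h2 : HasDerivAt (fun t => f (a + t • v)) ((f' (a + t • v)) v) t :=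
      (hf _ (hmem t ht)).comp_hasDerivAt t h1
    have h3 : HasDerivAt (fun t => f (a + t • v) - f a - t • (f' a v))
        ((f' (a + t • v)) v - f' a v) t := by
      have h := (h2.sub_const (f a)).sub ((hasDerivAt_id' t).smul_const (f' a v))
      rw [one_smul] at h
      exact h
    have h4 : HasDerivAt φ ⟪w, (f' (a + t • v)) v - f' a v⟫ t := by
      have := (hasDerivAt_const t w).inner ℝ h3
      simpa using this
    have h5 : HasDerivAt (fun t : ℝ => M / 2 * t ^ 2 * ‖v‖ ^ 2) (M * t * ‖v‖ ^ 2) t := by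
      have : HasDerivAt (fun t : ℝ => t ^ 2) (2 * t) t := by
        simpa using hasDerivAt_pow 2 t
      have := (this.const_mul (M / 2)).mul_const (‖v‖ ^ 2)
      rw [show M * t * ‖v‖ ^ 2 = M / 2 * (2 * t) * ‖v‖ ^ 2 by ring]
      exact this
    exact h4.sub h5
  have hanti : AntitoneOn ψ (Set.Icc (0:ℝ) 1) := by
    apply antitoneOn_of_deriv_nonpos (convex_Icc 0 1)
    · intro t ht
      exact (hψd t ht).continuousAt.continuousWithinAt
    · intro t ht
      rw [interior_Icc] at ht
      exact ((hψd t (Set.mem_Icc_of_Ioo ht)).differentiableAt).differentiableWithinAt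
    · intro t ht
      rw [interior_Icc] at ht
      rw [(hψd t (Set.mem_Icc_of_Ioo ht)).deriv]
      have hb1 : ⟪w, (f' (a + t • v)) v - f' a v⟫ ≤ M * t * ‖v‖ ^ 2 := by
        calc ⟪w, (f' (a + t • v)) v - f' a v⟫ ≤ ‖w‖ * ‖(f' (a + t • v)) v - f' a v‖ :=
              real_inner_le_norm _ _
        _ = ‖(f' (a + t • v) - f' a) v‖ := by rw [hwn, one_mul, ContinuousLinearMap.sub_apply]
        _ ≤ ‖f' (a + t • v) - f' a‖ * ‖v‖ := ContinuousLinearMap.le_opNorm _ _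
        _ ≤ (M * ‖(a + t • v) - a‖) * ‖v‖ := by
              have := hlip _ (hmem t (Set.mem_Icc_of_Ioo ht)) _ ha
              exact mul_le_mul_of_nonneg_right this (norm_nonneg _)
        _ = M * (t * ‖v‖) * ‖v‖ := by
              rw [add_sub_cancel_left, norm_smul, Real.norm_eq_abs, abs_of_pos ht.1]
        _ = M * t * ‖v‖ ^ 2 := by ring
      linarith
  have h01 : ψ 1 ≤ ψ 0 := hanti (Set.left_mem_Icc.mpr zero_le_one)
    (Set.right_mem_Icc.mpr zero_le_one) zero_le_one
  have hψ0 : ψ 0 = 0 := by simp [hψdef, hφdef]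
  have hψ1 : ψ 1 = ‖u‖ - M / 2 * ‖v‖ ^ 2 := by
    have : φ 1 = ‖u‖ := by
      have hab : a + (1:ℝ) • v = b := by rw [one_smul, hv]; abel
      rw [hφdef]
      simp only [one_smul]
      rw [show a + v = b from by rw [hv]; abel]
      rw [show f b - f a - f' a v = u from rfl, hw, real_inner_smul_left,
        real_inner_self_eq_norm_sq, sq]
      field_simp
    rw [hψdef]; simp [this]
  rw [hψ1, hψ0] at h01
  linarith
set_option maxHeartbeats 1000000 in
/-- The final scalar computation. -/
lemma final_numeric (G η GFhat D S r2v : ℝ) (hG : 1 < G) (hη : 0 < η) (hGFhat : 0 < GFhat)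
    (hDnn : 0 ≤ D) (hSnn : 0 ≤ S) (hr2nn : 0 ≤ r2v)
    (hr2 : r2v ≤ η * GFhat) (hss : S ≤ G * (η * GFhat))
    (hδtri : D ≤ 2 * (G * (η * GFhat)))
    (hcomb : D ^ 2 ≤ (η * GFhat + r2v) * ((G * S) * D + G / 2 * D ^ 2)
        + (G / 2 * S ^ 2) * (G * D) + (G / 2 * S ^ 2) * D) :
    D ≤ G ^ 5 * (η * GFhat) ^ 2 * (5 + η * GFhat) := by
  have hG0 : (0:ℝ) < G := lt_trans one_pos hG
  have ha0 : 0 < η * GFhat := mul_pos hη hGFhat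
  rcases le_or_gt 2 ((5 + η * GFhat) * G ^ 4 * (η * GFhat)) with hcase | hcase
  · -- large step sizes: the crude bound suffices
    have h3 := mul_le_mul_of_nonneg_left hcase (mul_pos hG0 ha0).le
    nlinarith [h3, hδtri]
  · -- small step sizes: the refined bound
    have hG1 : (0:ℝ) ≤ G - 1 := by linarith
    have hG4 : G ≤ G ^ 4 := by
      have h3 : (0:ℝ) ≤ G * ((G - 1) * (G ^ 2 + G + 1)) :=
        mul_nonneg hG0.le (mul_nonneg hG1 (by positivity))
      nlinarith [h3]
    have hGa : G * (η * GFhat) < 1 := by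
      have hq : (0:ℝ) ≤ G ^ 4 * (η * GFhat) ^ 2 := by positivity
      have hb1 : 5 * (G ^ 4 * (η * GFhat)) < 2 := by nlinarith [hq]
      have hb2 : G * (η * GFhat) ≤ G ^ 4 * (η * GFhat) :=
        mul_le_mul_of_nonneg_right hG4 ha0.le
      nlinarith [hb1, hb2, ha0]
    -- monotone substitution in hcomb
    have m2 : (G * S) * D + G / 2 * D ^ 2
        ≤ (G * (G * (η * GFhat))) * D + G / 2 * D ^ 2 := by
      have h3 := mul_le_mul_of_nonneg_right (mul_le_mul_of_nonneg_left hss hG0.le) hDnn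
      linarith [h3]
    have m4 : η * GFhat + r2v ≤ 2 * (η * GFhat) := by linarith [hr2]
    have m5 : (η * GFhat + r2v) * ((G * S) * D + G / 2 * D ^ 2)
        ≤ (2 * (η * GFhat)) * ((G * (G * (η * GFhat))) * D + G / 2 * D ^ 2) := by
      apply mul_le_mul m4 m2 _ (by positivity)
      have h4 : (0:ℝ) ≤ G / 2 * D ^ 2 := mul_nonneg (by positivity) (pow_nonneg hDnn 2)
      have h5 : (0:ℝ) ≤ (G * S) * D := mul_nonneg (mul_nonneg hG0.le hSnn) hDnn
      linarith
    have m6 : S ^ 2 ≤ (G * (η * GFhat)) ^ 2 := pow_le_pow_left₀ hSnn hss 2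
    have m7 : (G / 2 * S ^ 2) * (G * D) ≤ (G / 2 * (G * (η * GFhat)) ^ 2) * (G * D) :=
      mul_le_mul_of_nonneg_right (mul_le_mul_of_nonneg_left m6 (by positivity))
        (mul_nonneg hG0.le hDnn)
    have m8 : (G / 2 * S ^ 2) * D ≤ (G / 2 * (G * (η * GFhat)) ^ 2) * D :=
      mul_le_mul_of_nonneg_right (mul_le_mul_of_nonneg_left m6 (by positivity)) hDnn
    have hkey : (1 - G * (η * GFhat)) * D ^ 2
        ≤ (2 * G ^ 2 * (η * GFhat) ^ 2 + G ^ 4 * (η * GFhat) ^ 2 / 2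
            + G ^ 3 * (η * GFhat) ^ 2 / 2) * D := by
      nlinarith [hcomb, m5, m7, m8]
    have hlin : (1 - G * (η * GFhat)) * D
        ≤ 2 * G ^ 2 * (η * GFhat) ^ 2 + G ^ 4 * (η * GFhat) ^ 2 / 2
            + G ^ 3 * (η * GFhat) ^ 2 / 2 := by
      rcases eq_or_lt_of_le hDnn with h0 | h0
      · rw [← h0, mul_zero]; positivity
      · nlinarith [hkey, h0]
    -- the polynomial inequality
    have hpoly2 : (0:ℝ) ≤ G ^ 2 * ((G - 1) * (5 * G ^ 2 + 9 / 2 * G + 4)) :=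
      mul_nonneg (sq_nonneg G) (mul_nonneg hG1 (by positivity))
    have hfG2 : (5 + η * GFhat) * G ^ 6 * (η * GFhat) ≤ 2 * G ^ 2 := by
      have h3 := mul_le_mul_of_nonneg_left hcase.le (mul_pos hG0 hG0).le
      nlinarith [h3]
    have haG5 : (0:ℝ) ≤ (η * GFhat) * G ^ 5 := by positivity
    have hscal : 2 * G ^ 2 + G ^ 4 / 2 + G ^ 3 / 2
        ≤ (1 - G * (η * GFhat)) * ((5 + η * GFhat) * G ^ 5) := by
      nlinarith [hpoly2, hfG2, haG5]
    have hfinK : 2 * G ^ 2 * (η * GFhat) ^ 2 + G ^ 4 * (η * GFhat) ^ 2 / 2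
            + G ^ 3 * (η * GFhat) ^ 2 / 2
        ≤ (1 - G * (η * GFhat)) * (G ^ 5 * (η * GFhat) ^ 2 * (5 + η * GFhat)) := by
      have h3 := mul_le_mul_of_nonneg_right hscal (sq_nonneg (η * GFhat))
      nlinarith [h3]
    have h1Ga : 0 < 1 - G * (η * GFhat) := by linarith
    have hfin := le_trans hlin hfinK
    exact le_of_mul_le_mul_left (by linarith [hfin]) h1Ga

set_option maxHeartbeats 2000000 in
/-- one-step OGD–OMD coupling with an arbitrary bounded vector `g_t`:
starting from the coupled state `y_t = q(x_t)`, one OMD step in the hidden space (with the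
transported vector `g̃_t = J_q(x_t)^{-⊤} g_t`) and one OGD step in the original space (with
`g_t`) produce iterates that are `G⁵(5Ĝ_F² + Ĝ_F³η)η²`-close in the hidden space. -/
theorem ogd_omd_one_step_coupling
    {d : ℕ}
    (X Y : Set (EuclideanSpace ℝ (Fin d)))
    (hXcv : Convex ℝ X) (hXcp : IsCompact X) (hYcv : Convex ℝ Y) (hYcp : IsCompact Y)
    (q p : EuclideanSpace ℝ (Fin d) → EuclideanSpace ℝ (Fin d))
    (hqbij : Set.BijOn q X Y) (hqp : Set.InvOn p q X Y)
    (hqsmooth : ContDiffOn ℝ (⊤ : ℕ∞) q X)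
    (Jq Jp : EuclideanSpace ℝ (Fin d) →
      EuclideanSpace ℝ (Fin d) →L[ℝ] EuclideanSpace ℝ (Fin d))
    (hJq : ∀ x ∈ X, HasFDerivAt q (Jq x) x)
    (hJp : ∀ z ∈ Y, HasFDerivAt p (Jp z) z)
    (hJinv : ∀ x ∈ X, (Jq x).comp (Jp (q x)) = ContinuousLinearMap.id ℝ _ ∧
      (Jp (q x)).comp (Jq x) = ContinuousLinearMap.id ℝ _)
    (R : EuclideanSpace ℝ (Fin d) → ℝ)
    -- (A1): Hessian-compatible reparameterization
    (hRstrict : StrictConvexOn ℝ Y R)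
    (HR : EuclideanSpace ℝ (Fin d) →
      EuclideanSpace ℝ (Fin d) →L[ℝ] EuclideanSpace ℝ (Fin d))
    (hHR : ∀ z ∈ Y, HasFDerivAt (gradient R) (HR z) z)
    (hcompat : ∀ x ∈ X,
      (HR (q x)).comp ((Jq x).comp (ContinuousLinearMap.adjoint (Jq x)))
          = ContinuousLinearMap.id ℝ _ ∧
      ((Jq x).comp (ContinuousLinearMap.adjoint (Jq x))).comp (HR (q x))
          = ContinuousLinearMap.id ℝ _)
    -- (A2): smoothness of the regularizer and the reparameterization
    (G : ℝ) (hG : 1 < G)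
    (hqLip : LipschitzOnWith (Real.toNNReal G) q X)
    (hJpbd : ∀ z ∈ Y, ‖Jp z‖ ≤ G)
    (J2p : EuclideanSpace ℝ (Fin d) →
      EuclideanSpace ℝ (Fin d) →L[ℝ] EuclideanSpace ℝ (Fin d) →L[ℝ] EuclideanSpace ℝ (Fin d))
    (hJ2p : ∀ z ∈ Y, HasFDerivAt Jp (J2p z) z) (hJ2pbd : ∀ z ∈ Y, ‖J2p z‖ ≤ G)
    (hRsc : ∀ z ∈ Y, ∀ w ∈ Y, (1 / 2) * ‖z - w‖ ^ 2 ≤ bregman R z w)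
    (hgradRbd : ∀ z ∈ Y, ‖gradient R z‖ ≤ G)
    (T3 : EuclideanSpace ℝ (Fin d) →
      EuclideanSpace ℝ (Fin d) →L[ℝ] EuclideanSpace ℝ (Fin d) →L[ℝ] EuclideanSpace ℝ (Fin d))
    (hT3 : ∀ z ∈ Y, HasFDerivAt HR (T3 z) z) (hT3bd : ∀ z ∈ Y, ‖T3 z‖ ≤ G)
    (hDRLip : ∀ z ∈ Y, LipschitzOnWith (Real.toNNReal G) (fun w => bregman R z w) Y)
    -- stepsize, the vector gₜ and its hidden-space transport g̃ₜ with Jᵀ g̃ = g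
    (η GFhat : ℝ) (hη : 0 < η) (hGFhat : 0 < GFhat)
    (xt : EuclideanSpace ℝ (Fin d)) (hxt : xt ∈ X)
    (yt : EuclideanSpace ℝ (Fin d)) (hyt : yt = q xt)
    (g gtil : EuclideanSpace ℝ (Fin d))
    (hgbd : ‖g‖ ≤ GFhat)
    (hgtil : ContinuousLinearMap.adjoint (Jq xt) gtil = g)
    -- the OMD and OGD one-step updates
    (yt1 : EuclideanSpace ℝ (Fin d)) (hyt1mem : yt1 ∈ Y)
    (hyt1 : IsMinOn (fun y => ⟪gtil, y - yt⟫ + (1 / η) * bregman R y yt) Y yt1)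
    (xt1 : EuclideanSpace ℝ (Fin d)) (hxt1mem : xt1 ∈ X)
    (hxt1 : IsMinOn (fun x => ⟪g, x - xt⟫ + (1 / (2 * η)) * ‖x - xt‖ ^ 2) X xt1) :
    ‖yt1 - q xt1‖ ≤ G ^ 5 * (5 * GFhat ^ 2 + GFhat ^ 3 * η) * η ^ 2 := by
  have hG0 : (0:ℝ) < G := lt_trans one_pos hG
  set gR := gradient R with hgR
  have hytY : yt ∈ Y := by rw [hyt]; exact hqbij.mapsTo hxt
  set yh := q xt1 with hyh
  have hyhY : yh ∈ Y := hqbij.mapsTo hxt1mem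
  obtain ⟨xu, hxuX, hxuq⟩ := hqbij.surjOn hyt1mem
  have hpyt1 : p yt1 = xu := by rw [← hxuq]; exact hqp.1 hxuX
  have hpyh : p yh = xt1 := hqp.1 hxt1mem
  have hpyt : p yt = xt := by rw [hyt]; exact hqp.1 hxt
  set A := Jp yt with hA
  have hAnorm : ‖A‖ ≤ G := hJpbd yt hytY
  have hid1 : (Jq xt).comp A = ContinuousLinearMap.id ℝ _ := by
    rw [hA, hyt]; exact (hJinv xt hxt).1
  -- gtil = A† g
  have hgtilA : gtil = ContinuousLinearMap.adjoint A g := by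
    rw [← hgtil, ← ContinuousLinearMap.comp_apply, ← ContinuousLinearMap.adjoint_comp,
      hid1, ContinuousLinearMap.adjoint_id, ContinuousLinearMap.id_apply]
  have hgtilbd : ‖gtil‖ ≤ G * GFhat := by
    rw [hgtilA]
    calc ‖ContinuousLinearMap.adjoint A g‖ ≤ ‖ContinuousLinearMap.adjoint A‖ * ‖g‖ :=
          ContinuousLinearMap.le_opNorm _ _
    _ = ‖A‖ * ‖g‖ := by rw [LinearIsometryEquiv.norm_map ContinuousLinearMap.adjoint A]
    _ ≤ G * GFhat := mul_le_mul hAnorm hgbd (norm_nonneg _) hG0.le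
  -- form of the Hessian of R on Y
  have hHRform : ∀ z ∈ Y, HR z = (ContinuousLinearMap.adjoint (Jp z)).comp (Jp z) := by
    intro z hz
    obtain ⟨x, hxX, rfl⟩ := hqbij.surjOn hz
    obtain ⟨hi1, hi2⟩ := hJinv x hxX
    obtain ⟨hc1, hc2⟩ := hcompat x hxX
    have hadj : (ContinuousLinearMap.adjoint (Jq x)).comp
        (ContinuousLinearMap.adjoint (Jp (q x))) = ContinuousLinearMap.id ℝ _ := by
      rw [← ContinuousLinearMap.adjoint_comp, hi2, ContinuousLinearMap.adjoint_id]
    have key : ((Jq x).comp (ContinuousLinearMap.adjoint (Jq x))).comp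
        ((ContinuousLinearMap.adjoint (Jp (q x))).comp (Jp (q x)))
        = ContinuousLinearMap.id ℝ _ := by
      ext w
      simp only [ContinuousLinearMap.comp_apply, ContinuousLinearMap.id_apply]
      have h1 : ContinuousLinearMap.adjoint (Jq x)
          (ContinuousLinearMap.adjoint (Jp (q x)) (Jp (q x) w)) = Jp (q x) w := by
        rw [← ContinuousLinearMap.comp_apply, hadj, ContinuousLinearMap.id_apply]
      rw [h1, ← ContinuousLinearMap.comp_apply, hi1, ContinuousLinearMap.id_apply]
    calc HR (q x) = (HR (q x)).comp (ContinuousLinearMap.id ℝ _) := by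
          rw [ContinuousLinearMap.comp_id]
    _ = (HR (q x)).comp (((Jq x).comp (ContinuousLinearMap.adjoint (Jq x))).comp
          ((ContinuousLinearMap.adjoint (Jp (q x))).comp (Jp (q x)))) := by rw [key]
    _ = ((HR (q x)).comp ((Jq x).comp (ContinuousLinearMap.adjoint (Jq x)))).comp
          ((ContinuousLinearMap.adjoint (Jp (q x))).comp (Jp (q x))) :=
          (ContinuousLinearMap.comp_assoc (HR (q x))
            ((Jq x).comp (ContinuousLinearMap.adjoint (Jq x)))
            ((ContinuousLinearMap.adjoint (Jp (q x))).comp (Jp (q x)))).symm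
    _ = (ContinuousLinearMap.adjoint (Jp (q x))).comp (Jp (q x)) := by
          rw [hc1, ContinuousLinearMap.id_comp]
  have hHRyt : HR yt = (ContinuousLinearMap.adjoint A).comp A := by
    rw [hA]; exact hHRform yt hytY
  have hHRbd : ∀ z ∈ Y, ‖HR z‖ ≤ G ^ 2 := by
    intro z hz
    rw [hHRform z hz, ContinuousLinearMap.norm_adjoint_comp_self, sq]
    exact mul_le_mul (hJpbd z hz) (hJpbd z hz) (norm_nonneg _) hG0.le
  -- Lipschitz facts on Y
  have hgRlip : ∀ z ∈ Y, ∀ w ∈ Y, ‖gR z - gR w‖ ≤ G ^ 2 * ‖z - w‖ := by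
    intro z hz w hw
    exact hYcv.norm_image_sub_le_of_norm_hasFDerivWithin_le
      (fun x hx => (hHR x hx).hasFDerivWithinAt) hHRbd hw hz
  have hHRlip : ∀ z ∈ Y, ∀ w ∈ Y, ‖HR z - HR w‖ ≤ G * ‖z - w‖ := by
    intro z hz w hw
    exact hYcv.norm_image_sub_le_of_norm_hasFDerivWithin_le
      (fun x hx => (hT3 x hx).hasFDerivWithinAt) hT3bd hw hz
  have hJplip : ∀ z ∈ Y, ∀ w ∈ Y, ‖Jp z - Jp w‖ ≤ G * ‖z - w‖ := by
    intro z hz w hw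
    exact hYcv.norm_image_sub_le_of_norm_hasFDerivWithin_le
      (fun x hx => (hJ2p x hx).hasFDerivWithinAt) hJ2pbd hw hz
  -- Taylor bounds on Y
  have hgRtay : ∀ a ∈ Y, ∀ b ∈ Y, ‖gR b - gR a - HR a (b - a)‖ ≤ G / 2 * ‖b - a‖ ^ 2 :=
    fun a ha b hb => half_taylor hYcv hHR hG0.le hHRlip ha hb
  have hptay : ∀ a ∈ Y, ∀ b ∈ Y, ‖p b - p a - Jp a (b - a)‖ ≤ G / 2 * ‖b - a‖ ^ 2 :=
    fun a ha b hb => half_taylor hYcv hJp hG0.le hJplip ha hb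
  -- variational inequality for the OGD step
  have hinvη : η * (1 / η) = 1 := by field_simp
  have hinv2η : 1 / (2 * η) * 2 = 1 / η := by field_simp
  have hXVI : ∀ x ∈ X, 0 ≤ η * ⟪g, x - xt1⟫ + ⟪xt1 - xt, x - xt1⟫ := by
    intro x hx
    have key : 0 ≤ ⟪g, x - xt1⟫ + (1 / η) * ⟪xt1 - xt, x - xt1⟫ := by
      apply aux_pos _ ((1 / (2 * η)) * ‖x - xt1‖ ^ 2) (by positivity)
      intro s hs0 hs1
      have hxs : xt1 + s • (x - xt1) ∈ X := hXcv.add_smul_sub_mem hxt1mem hx ⟨hs0.le, hs1⟩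
      have hmin : ⟪g, xt1 - xt⟫ + (1 / (2 * η)) * ‖xt1 - xt‖ ^ 2
          ≤ ⟪g, (xt1 + s • (x - xt1)) - xt⟫
            + (1 / (2 * η)) * ‖(xt1 + s • (x - xt1)) - xt‖ ^ 2 :=
        isMinOn_iff.mp hxt1 _ hxs
      have e0 : xt1 + s • (x - xt1) - xt = (xt1 - xt) + s • (x - xt1) := by
        rw [add_sub_right_comm]
      have e1 : ⟪g, xt1 + s • (x - xt1) - xt⟫ = ⟪g, xt1 - xt⟫ + s * ⟪g, x - xt1⟫ := by
        rw [e0, inner_add_right, real_inner_smul_right]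
      have e2 : ‖xt1 + s • (x - xt1) - xt‖ ^ 2
          = ‖xt1 - xt‖ ^ 2 + 2 * (s * ⟪xt1 - xt, x - xt1⟫) + s ^ 2 * ‖x - xt1‖ ^ 2 := by
        rw [e0, norm_add_sq_real, real_inner_smul_right, norm_smul]
        simp [mul_pow, Real.norm_eq_abs, sq_abs]
      rw [e1, e2] at hmin
      set P := ⟪g, x - xt1⟫
      set Q := ⟪xt1 - xt, x - xt1⟫
      set N := ‖x - xt1‖ ^ 2
      set P0 := ⟪g, xt1 - xt⟫
      set N0 := ‖xt1 - xt‖ ^ 2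
      have heq : s * (P + 1 / η * Q) + s ^ 2 * (1 / (2 * η) * N)
          = (P0 + s * P + 1 / (2 * η) * (N0 + 2 * (s * Q) + s ^ 2 * N))
            - (P0 + 1 / (2 * η) * N0) := by
        linear_combination (-(s * Q)) * hinv2η
      rw [heq]
      linarith
    have h2 : η * (⟪g, x - xt1⟫ + (1 / η) * ⟪xt1 - xt, x - xt1⟫)
        = η * ⟪g, x - xt1⟫ + ⟪xt1 - xt, x - xt1⟫ := by
      linear_combination ⟪xt1 - xt, x - xt1⟫ * hinvη
    linarith [mul_nonneg hη.le key]
  -- variational inequality for the OMD step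
  have hYVI : ∀ y ∈ Y, 0 ≤ η * ⟪gtil, y - yt1⟫ + ⟪gR yt1 - gR yt, y - yt1⟫ := by
    intro y hy
    apply aux_pos _ (G ^ 2 * ‖y - yt1‖ ^ 2) (by positivity)
    intro s hs0 hs1
    set ys := yt1 + s • (y - yt1) with hysdef
    have hys : ys ∈ Y := hYcv.add_smul_sub_mem hyt1mem hy ⟨hs0.le, hs1⟩
    have hmin : ⟪gtil, yt1 - yt⟫ + (1 / η) * bregman R yt1 yt
        ≤ ⟪gtil, ys - yt⟫ + (1 / η) * bregman R ys yt := isMinOn_iff.mp hyt1 _ hys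
    -- upper bound on R ys - R yt1
    have hup : R ys - R yt1 ≤ s * ⟪gR yt1, y - yt1⟫ + s ^ 2 * (G ^ 2 * ‖y - yt1‖ ^ 2) := by
      have h1 := hRsc yt1 hyt1mem ys hys
      simp only [bregman] at h1
      have e3 : yt1 - ys = -(s • (y - yt1)) := by rw [hysdef]; abel
      rw [e3, inner_neg_right] at h1
      -- h1 : (1/2)*‖-(s•(y-yt1))‖^2 ≤ R yt1 - R ys + ⟪gR ys, s•(y-yt1)⟫
      have h2 : R ys - R yt1 ≤ ⟪gR ys, s • (y - yt1)⟫ := by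
        nlinarith [norm_nonneg (-(s • (y - yt1))), sq_nonneg ‖(-(s • (y - yt1)))‖]
      have h3 : ⟪gR ys, s • (y - yt1)⟫ ≤ s * ⟪gR yt1, y - yt1⟫
          + s ^ 2 * (G ^ 2 * ‖y - yt1‖ ^ 2) := by
        rw [real_inner_smul_right]
        have e4 : ⟪gR ys, y - yt1⟫ = ⟪gR yt1, y - yt1⟫ + ⟪gR ys - gR yt1, y - yt1⟫ := by
          rw [← inner_add_left]; congr 1; abel
        have e5 : ⟪gR ys - gR yt1, y - yt1⟫ ≤ (G ^ 2 * (s * ‖y - yt1‖)) * ‖y - yt1‖ := by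
          calc ⟪gR ys - gR yt1, y - yt1⟫ ≤ ‖gR ys - gR yt1‖ * ‖y - yt1‖ :=
                real_inner_le_norm _ _
          _ ≤ (G ^ 2 * ‖ys - yt1‖) * ‖y - yt1‖ := by
                have := hgRlip ys hys yt1 hyt1mem
                exact mul_le_mul_of_nonneg_right this (norm_nonneg _)
          _ = (G ^ 2 * (s * ‖y - yt1‖)) * ‖y - yt1‖ := by
                rw [hysdef, add_sub_cancel_left, norm_smul, Real.norm_eq_abs,
                  abs_of_pos hs0]
        have e6 : s * ⟪gR ys, y - yt1⟫ ≤ s * (⟪gR yt1, y - yt1⟫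
            + (G ^ 2 * (s * ‖y - yt1‖)) * ‖y - yt1‖) := by
          apply mul_le_mul_of_nonneg_left _ hs0.le
          rw [e4]; linarith
        calc s * ⟪gR ys, y - yt1⟫
            ≤ s * (⟪gR yt1, y - yt1⟫ + (G ^ 2 * (s * ‖y - yt1‖)) * ‖y - yt1‖) := e6
        _ = s * ⟪gR yt1, y - yt1⟫ + s ^ 2 * (G ^ 2 * ‖y - yt1‖ ^ 2) := by ring
      linarith
    -- expand bregman difference
    have hbreg : bregman R ys yt - bregman R yt1 yt
        = R ys - R yt1 - s * ⟪gR yt, y - yt1⟫ := by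
      simp only [bregman]
      have e7 : ⟪gR yt, ys - yt⟫ = ⟪gR yt, yt1 - yt⟫ + s * ⟪gR yt, y - yt1⟫ := by
        rw [hysdef, show yt1 + s • (y - yt1) - yt = (yt1 - yt) + s • (y - yt1) from
          add_sub_right_comm _ _ _, inner_add_right, real_inner_smul_right]
      rw [e7]; ring
    -- combine
    have hmin' : 0 ≤ η * (⟪gtil, ys - yt⟫ - ⟪gtil, yt1 - yt⟫)
        + (bregman R ys yt - bregman R yt1 yt) := by
      have hmul := mul_le_mul_of_nonneg_left hmin hη.le
      have e8 : η * (⟪gtil, yt1 - yt⟫ + 1 / η * bregman R yt1 yt)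
          = η * ⟪gtil, yt1 - yt⟫ + bregman R yt1 yt := by
        linear_combination bregman R yt1 yt * hinvη
      have e9 : η * (⟪gtil, ys - yt⟫ + 1 / η * bregman R ys yt)
          = η * ⟪gtil, ys - yt⟫ + bregman R ys yt := by
        linear_combination bregman R ys yt * hinvη
      rw [e8, e9] at hmul
      linarith
    have e10 : ⟪gtil, ys - yt⟫ - ⟪gtil, yt1 - yt⟫ = s * ⟪gtil, y - yt1⟫ := by
      rw [← inner_sub_right, show ys - yt - (yt1 - yt) = s • (y - yt1) from by
        rw [hysdef]; abel, real_inner_smul_right]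
    rw [e10, hbreg] at hmin'
    have final : η * (s * ⟪gtil, y - yt1⟫) + (R ys - R yt1 - s * ⟪gR yt, y - yt1⟫)
        ≤ s * (η * ⟪gtil, y - yt1⟫ + ⟪gR yt1 - gR yt, y - yt1⟫)
          + s ^ 2 * (G ^ 2 * ‖y - yt1‖ ^ 2) := by
      have e11 : ⟪gR yt1 - gR yt, y - yt1⟫ = ⟪gR yt1, y - yt1⟫ - ⟪gR yt, y - yt1⟫ :=
        inner_sub_left _ _ _
      rw [e11]
      nlinarith [hup]
    linarith
  -- strong monotonicity of the gradient
  have hmono : ∀ z ∈ Y, ∀ w ∈ Y, ‖z - w‖ ^ 2 ≤ ⟪gR z - gR w, z - w⟫ := by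
    intro z hz w hw
    have h1 := hRsc z hz w hw
    have h2 := hRsc w hw z hz
    simp only [bregman] at h1 h2
    have e : ⟪gR z, w - z⟫ = -⟪gR z, z - w⟫ := by
      rw [← inner_neg_right]; congr 1; abel
    rw [e] at h2
    rw [norm_sub_rev] at h2
    rw [inner_sub_left]
    linarith
  -- basic step-size bounds
  have hr2 : ‖xt1 - xt‖ ≤ η * GFhat := by
    have h := hXVI xt hxt
    have e : ⟪xt1 - xt, xt - xt1⟫ = -‖xt1 - xt‖ ^ 2 := by
      rw [show xt - xt1 = -(xt1 - xt) from by abel, inner_neg_right,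
        real_inner_self_eq_norm_sq]
    rw [e] at h
    have cs : ⟪g, xt - xt1⟫ ≤ GFhat * ‖xt1 - xt‖ := by
      calc ⟪g, xt - xt1⟫ ≤ ‖g‖ * ‖xt - xt1‖ := real_inner_le_norm _ _
      _ ≤ GFhat * ‖xt1 - xt‖ := by
          rw [norm_sub_rev]
          exact mul_le_mul_of_nonneg_right hgbd (norm_nonneg _)
    apply aux_sq_le _ _ (norm_nonneg _) (by positivity)
    nlinarith [mul_le_mul_of_nonneg_left cs hη.le]
  have hr1 : ‖yt1 - yt‖ ≤ η * (G * GFhat) := by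
    have h := hYVI yt hytY
    have hm := hmono yt1 hyt1mem yt hytY
    have e : ⟪gR yt1 - gR yt, yt - yt1⟫ = -⟪gR yt1 - gR yt, yt1 - yt⟫ := by
      rw [← inner_neg_right]; congr 1; abel
    rw [e] at h
    have cs : ⟪gtil, yt - yt1⟫ ≤ (G * GFhat) * ‖yt1 - yt‖ := by
      calc ⟪gtil, yt - yt1⟫ ≤ ‖gtil‖ * ‖yt - yt1‖ := real_inner_le_norm _ _
      _ ≤ (G * GFhat) * ‖yt1 - yt‖ := by
          rw [norm_sub_rev]
          exact mul_le_mul_of_nonneg_right hgtilbd (norm_nonneg _)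
    apply aux_sq_le _ _ (norm_nonneg _) (by positivity)
    nlinarith [mul_le_mul_of_nonneg_left cs hη.le]
  have hss : ‖yh - yt‖ ≤ G * (η * GFhat) := by
    have hlip := lipschitzOnWith_iff_norm_sub_le.mp hqLip hxt1mem hxt
    rw [Real.coe_toNNReal G hG0.le] at hlip
    have h1 : ‖yh - yt‖ ≤ G * ‖xt1 - xt‖ := by rw [hyh, hyt]; exact hlip
    calc ‖yh - yt‖ ≤ G * ‖xt1 - xt‖ := h1
    _ ≤ G * (η * GFhat) := mul_le_mul_of_nonneg_left hr2 hG0.le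
  -- step 5 : strong monotonicity + OMD variational inequality
  have h5 : ‖yh - yt1‖ ^ 2 ≤ η * ⟪gtil, yh - yt1⟫ + ⟪gR yh - gR yt, yh - yt1⟫ := by
    have h1 := hmono yh hyhY yt1 hyt1mem
    have h2 := hYVI yh hyhY
    have e : ⟪gR yh - gR yt1, yh - yt1⟫ + ⟪gR yt1 - gR yt, yh - yt1⟫
        = ⟪gR yh - gR yt, yh - yt1⟫ := by
      rw [← inner_add_left]; congr 1; abel
    linarith
  -- step 6 : Taylor expand the gradient of R around yt
  have h6 : ⟪gR yh - gR yt, yh - yt1⟫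
      ≤ ⟪A (yh - yt), A (yh - yt1)⟫ + (G / 2 * ‖yh - yt‖ ^ 2) * ‖yh - yt1‖ := by
    have htay := hgRtay yt hytY yh hyhY
    have hdec : ⟪gR yh - gR yt, yh - yt1⟫ = ⟪HR yt (yh - yt), yh - yt1⟫
        + ⟪gR yh - gR yt - HR yt (yh - yt), yh - yt1⟫ := by
      rw [← inner_add_left]; congr 1; abel
    have hAA : ⟪HR yt (yh - yt), yh - yt1⟫ = ⟪A (yh - yt), A (yh - yt1)⟫ := by
      rw [hHRyt, ContinuousLinearMap.comp_apply, ContinuousLinearMap.adjoint_inner_left]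
    have hcs : ⟪gR yh - gR yt - HR yt (yh - yt), yh - yt1⟫
        ≤ (G / 2 * ‖yh - yt‖ ^ 2) * ‖yh - yt1‖ := by
      calc ⟪gR yh - gR yt - HR yt (yh - yt), yh - yt1⟫
          ≤ ‖gR yh - gR yt - HR yt (yh - yt)‖ * ‖yh - yt1‖ := real_inner_le_norm _ _
      _ ≤ (G / 2 * ‖yh - yt‖ ^ 2) * ‖yh - yt1‖ :=
          mul_le_mul_of_nonneg_right htay (norm_nonneg _)
    linarith
  have hgtilv : ⟪gtil, yh - yt1⟫ = ⟪g, A (yh - yt1)⟫ := by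
    rw [hgtilA, ContinuousLinearMap.adjoint_inner_left]
  have hAvbd : ‖A (yh - yt1)‖ ≤ G * ‖yh - yt1‖ := by
    calc ‖A (yh - yt1)‖ ≤ ‖A‖ * ‖yh - yt1‖ := ContinuousLinearMap.le_opNorm _ _
    _ ≤ G * ‖yh - yt1‖ := mul_le_mul_of_nonneg_right hAnorm (norm_nonneg _)
  -- step 8 : Taylor expand p around yt
  have h8 : ⟪A (yh - yt), A (yh - yt1)⟫ ≤ ⟪xt1 - xt, A (yh - yt1)⟫
      + (G / 2 * ‖yh - yt‖ ^ 2) * (G * ‖yh - yt1‖) := by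
    have htay := hptay yt hytY yh hyhY
    rw [hpyh, hpyt, ← hA] at htay
    have hdec : ⟪A (yh - yt), A (yh - yt1)⟫ = ⟪xt1 - xt, A (yh - yt1)⟫
        - ⟪xt1 - xt - A (yh - yt), A (yh - yt1)⟫ := by
      rw [← inner_sub_left]; congr 1; abel
    have hcs : -⟪xt1 - xt - A (yh - yt), A (yh - yt1)⟫
        ≤ (G / 2 * ‖yh - yt‖ ^ 2) * (G * ‖yh - yt1‖) := by
      have h1 := real_inner_le_norm (-(xt1 - xt - A (yh - yt))) (A (yh - yt1))
      rw [inner_neg_left, norm_neg] at h1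
      calc -⟪xt1 - xt - A (yh - yt), A (yh - yt1)⟫
          ≤ ‖xt1 - xt - A (yh - yt)‖ * ‖A (yh - yt1)‖ := h1
      _ ≤ (G / 2 * ‖yh - yt‖ ^ 2) * (G * ‖yh - yt1‖) :=
          mul_le_mul htay hAvbd (norm_nonneg _) (by positivity)
    linarith
  -- step 9 : compare with the OGD variational inequality
  have h9 : η * ⟪g, A (yh - yt1)⟫ + ⟪xt1 - xt, A (yh - yt1)⟫
      ≤ (η * GFhat + ‖xt1 - xt‖)
        * ((G * ‖yh - yt‖) * ‖yh - yt1‖ + G / 2 * ‖yh - yt1‖ ^ 2) := by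
    have htay2 := hptay yh hyhY yt1 hyt1mem
    rw [hpyt1, hpyh] at htay2
    have hJpdiff : ‖A - Jp yh‖ ≤ G * ‖yh - yt‖ := by
      rw [hA]
      have h1 := hJplip yt hytY yh hyhY
      rwa [norm_sub_rev yt yh] at h1
    have he7eq : A (yh - yt1) - (xt1 - xu)
        = (A - Jp yh) (yh - yt1) + (xu - xt1 - Jp yh (yt1 - yh)) := by
      have e1 : (Jp yh) (yt1 - yh) = -((Jp yh) (yh - yt1)) := by
        rw [← map_neg]; congr 1; abel
      rw [ContinuousLinearMap.sub_apply, e1]; abel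
    have he7 : ‖A (yh - yt1) - (xt1 - xu)‖
        ≤ (G * ‖yh - yt‖) * ‖yh - yt1‖ + G / 2 * ‖yh - yt1‖ ^ 2 := by
      rw [he7eq]
      calc ‖(A - Jp yh) (yh - yt1) + (xu - xt1 - Jp yh (yt1 - yh))‖
          ≤ ‖(A - Jp yh) (yh - yt1)‖ + ‖xu - xt1 - Jp yh (yt1 - yh)‖ := norm_add_le _ _
      _ ≤ (G * ‖yh - yt‖) * ‖yh - yt1‖ + G / 2 * ‖yh - yt1‖ ^ 2 := by
          have b1 : ‖(A - Jp yh) (yh - yt1)‖ ≤ (G * ‖yh - yt‖) * ‖yh - yt1‖ := by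
            calc ‖(A - Jp yh) (yh - yt1)‖ ≤ ‖A - Jp yh‖ * ‖yh - yt1‖ :=
                ContinuousLinearMap.le_opNorm _ _
            _ ≤ (G * ‖yh - yt‖) * ‖yh - yt1‖ :=
                mul_le_mul_of_nonneg_right hJpdiff (norm_nonneg _)
          have b2 : ‖xu - xt1 - Jp yh (yt1 - yh)‖ ≤ G / 2 * ‖yh - yt1‖ ^ 2 := by
            calc ‖xu - xt1 - Jp yh (yt1 - yh)‖ ≤ G / 2 * ‖yt1 - yh‖ ^ 2 := htay2
            _ = G / 2 * ‖yh - yt1‖ ^ 2 := by rw [norm_sub_rev]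
          linarith
    have hVIu := hXVI xu hxuX
    have hdec1 : ⟪g, A (yh - yt1)⟫ = -⟪g, xu - xt1⟫
        + ⟪g, A (yh - yt1) - (xt1 - xu)⟫ := by
      rw [← inner_neg_right, ← inner_add_right]; congr 1; abel
    have hdec2 : ⟪xt1 - xt, A (yh - yt1)⟫ = -⟪xt1 - xt, xu - xt1⟫
        + ⟪xt1 - xt, A (yh - yt1) - (xt1 - xu)⟫ := by
      rw [← inner_neg_right, ← inner_add_right]; congr 1; abel
    have hcs1 : ⟪g, A (yh - yt1) - (xt1 - xu)⟫ ≤ GFhat * ‖A (yh - yt1) - (xt1 - xu)‖ := by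
      calc ⟪g, A (yh - yt1) - (xt1 - xu)⟫
          ≤ ‖g‖ * ‖A (yh - yt1) - (xt1 - xu)‖ := real_inner_le_norm _ _
      _ ≤ GFhat * ‖A (yh - yt1) - (xt1 - xu)‖ :=
          mul_le_mul_of_nonneg_right hgbd (norm_nonneg _)
    have hcs2 : ⟪xt1 - xt, A (yh - yt1) - (xt1 - xu)⟫
        ≤ ‖xt1 - xt‖ * ‖A (yh - yt1) - (xt1 - xu)‖ := real_inner_le_norm _ _
    have hmul1 : η * ⟪g, A (yh - yt1) - (xt1 - xu)⟫
        ≤ η * (GFhat * ‖A (yh - yt1) - (xt1 - xu)‖) :=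
      mul_le_mul_of_nonneg_left hcs1 hη.le
    have hmul2 : (η * GFhat + ‖xt1 - xt‖) * ‖A (yh - yt1) - (xt1 - xu)‖
        ≤ (η * GFhat + ‖xt1 - xt‖)
          * ((G * ‖yh - yt‖) * ‖yh - yt1‖ + G / 2 * ‖yh - yt1‖ ^ 2) :=
      mul_le_mul_of_nonneg_left he7 (by positivity)
    have hdec1η : η * ⟪g, A (yh - yt1)⟫
        = η * (-⟪g, xu - xt1⟫ + ⟪g, A (yh - yt1) - (xt1 - xu)⟫) := by rw [← hdec1]
    linarith [hdec1η, hdec2, hVIu, hmul1, hmul2, hcs2]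
  -- putting the chain together
  have haux : η * ⟪gtil, yh - yt1⟫ = η * ⟪g, A (yh - yt1)⟫ := by rw [hgtilv]
  have hcomb : ‖yh - yt1‖ ^ 2
      ≤ (η * GFhat + ‖xt1 - xt‖)
          * ((G * ‖yh - yt‖) * ‖yh - yt1‖ + G / 2 * ‖yh - yt1‖ ^ 2)
        + (G / 2 * ‖yh - yt‖ ^ 2) * (G * ‖yh - yt1‖)
        + (G / 2 * ‖yh - yt‖ ^ 2) * ‖yh - yt1‖ := by
    linarith [h5, h6, h8, h9, haux]
  -- final numeric computation
  have hDnn : (0:ℝ) ≤ ‖yh - yt1‖ := norm_nonneg _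
  have hSnn : (0:ℝ) ≤ ‖yh - yt‖ := norm_nonneg _
  have hr2nn : (0:ℝ) ≤ ‖xt1 - xt‖ := norm_nonneg _
  have hδtri : ‖yh - yt1‖ ≤ 2 * (G * (η * GFhat)) := by
    have e : yh - yt1 = (yh - yt) + (yt - yt1) := by abel
    have h1 : ‖yh - yt1‖ ≤ ‖yh - yt‖ + ‖yt - yt1‖ := by
      rw [e]; exact norm_add_le _ _
    have h2 : ‖yt - yt1‖ = ‖yt1 - yt‖ := norm_sub_rev _ _
    linarith [hss, hr1]
  have hrhs : G ^ 5 * (5 * GFhat ^ 2 + GFhat ^ 3 * η) * η ^ 2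
      = G ^ 5 * (η * GFhat) ^ 2 * (5 + η * GFhat) := by ring
  have hgoal : ‖yt1 - yh‖ = ‖yh - yt1‖ := norm_sub_rev _ _
  rw [hgoal, hrhs]
  exact final_numeric G η GFhat _ _ _ hG hη hGFhat hDnn hSnn hr2nn hr2 hss hδtri hcomb
end

section
/- Under Assumptions (A1) and (A2), fix y_t ∈ Y and a vector g̃_t with ‖g̃_t‖ ≤ G̃_F, and let Y_t = {y ∈ Y : ‖y − y_t‖₂ ≤ 2η G̃_F} and Φ_t(y) = ⟨g̃_t, y − y_t⟩ + (1/(2η)) (y − y_t)ᵀ ∇²R(y_t) (y − y_t). Then the mirror-descent iterate y_{t+1} = argmin_{y∈Y} { ⟨g̃_t, y − y_t⟩ + (1/η) D_R(y‖y_t) } satisfies y_{t+1} = argmin_{y∈Y_t} { Φ_t(y) + (1/η) ε_t(y) }, where ε_t(y) := D_R(y‖y_t) − (1/2)(y − y_t)ᵀ∇²R(y_t)(y − y_t); moreover |ε_t(y)| ≤ (4/3) G G̃_F³ η³ for all y ∈ Y_t. -/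
open scoped RealInnerProductSpace

/-!
Comparing the mirror-descent iterate with `y_t` itself and using strong convexity,
`‖y_{t+1} - y_t‖² / (2η) ≤ -⟪g̃_t, y_{t+1} - y_t⟫ ≤ G̃_F ‖y_{t+1} - y_t‖`, which localizes the
iterate to `Y_t`. On all of `Y` the perturbed model `Φ_t + ε_t / η` is literally the
mirror-descent objective, so minimality passes to the subset `Y_t`. Finally `ε_t(y)` is the
second-order Taylor remainder of `R` along the segment from `y_t` to `y`, hence at most
`G ‖y - y_t‖³ / 6 ≤ (4/3) G G̃_F³ η³` on `Y_t`.
-/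

open Set

section TaylorScalar

variable {u u' : ℝ → ℝ} {b C : ℝ}

theorem abs_le_of_abs_deriv_le_pow_div_factorial {n : ℕ}
    (hu : ∀ s ∈ Icc 0 b, HasDerivWithinAt u (u' s) (Icc 0 b) s) (hu0 : u 0 = 0)
    (hbd : ∀ s ∈ Icc 0 b, |u' s| ≤ C * s ^ n / n.factorial) :
    ∀ s ∈ Icc 0 b, |u s| ≤ C * s ^ (n + 1) / (n + 1).factorial := by
  have hB : ∀ x : ℝ, HasDerivAt (fun x => C * x ^ (n + 1) / (n + 1).factorial)
      (C * x ^ n / n.factorial) x := fun x => by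
    refine (((hasDerivAt_pow (n + 1) x).const_mul C).div_const _).congr_deriv ?_
    rw [Nat.factorial_succ, Nat.add_sub_cancel]
    push_cast
    field_simp
  have hu' : ∀ s ∈ Ico 0 b, HasDerivWithinAt u (u' s) (Ici s) s := fun s hs =>
    ((hu s (Ico_subset_Icc_self hs)).mono (Icc_subset_Icc_left hs.1)).mono_of_mem_nhdsWithin
      (Icc_mem_nhdsGE_of_mem ⟨le_rfl, hs.2⟩)
  intro s hs
  simpa using image_norm_le_of_norm_deriv_right_le_deriv_boundary
    (fun s hs => (hu s hs).continuousWithinAt) hu' (by simp [hu0]) hB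
    (fun x hx => by simpa using hbd x (Ico_subset_Icc_self hx)) hs

theorem abs_sub_taylor_two_le {f g g' g'' : ℝ → ℝ} {M : ℝ} (hb : 0 ≤ b)
    (hf : ∀ s ∈ Icc 0 b, HasDerivWithinAt f (g s) (Icc 0 b) s)
    (hg : ∀ s ∈ Icc 0 b, HasDerivWithinAt g (g' s) (Icc 0 b) s)
    (hg' : ∀ s ∈ Icc 0 b, HasDerivWithinAt g' (g'' s) (Icc 0 b) s)
    (hbd : ∀ s ∈ Icc 0 b, |g'' s| ≤ M) :
    |f b - f 0 - g 0 * b - g' 0 / 2 * b ^ 2| ≤ M / 6 * b ^ 3 := by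
  have hlin (c s : ℝ) : HasDerivWithinAt (fun t => c * t) c (Icc 0 b) s := by
    simpa using ((hasDerivAt_id s).const_mul c).hasDerivWithinAt
  have hquad (c s : ℝ) : HasDerivWithinAt (fun t => c / 2 * t ^ 2) (c * s) (Icc 0 b) s :=
    ((hasDerivAt_pow 2 s).const_mul (c / 2)).hasDerivWithinAt.congr_deriv (by ring)
  have first := abs_le_of_abs_deriv_le_pow_div_factorial (n := 0) (C := M)
    (fun s hs => (hg' s hs).sub_const (g' 0)) (sub_self _) (by simpa using hbd)
  have second := abs_le_of_abs_deriv_le_pow_div_factorial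
    (fun s hs => ((hg s hs).sub_const (g 0)).sub (hlin (g' 0) s)) (by simp) first
  have third := abs_le_of_abs_deriv_le_pow_div_factorial
    (fun s hs => (((hf s hs).sub_const (f 0)).sub (hlin (g 0) s)).sub (hquad (g' 0) s))
    (by simp) second b ⟨hb, le_rfl⟩
  norm_num [Nat.factorial] at third
  linarith

end TaylorScalar

section Bregman

variable {E : Type*} [NormedAddCommGroup E] [InnerProductSpace ℝ E] [CompleteSpace E]
  {R : E → ℝ} {S : Set E} {x y : E}

theorem bregman_add_bregman_swap (R : E → ℝ) (x y : E) :
    bregman R y x + bregman R x y = ⟪gradient R y - gradient R x, y - x⟫ := by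
  simp only [bregman, inner_sub_left, inner_sub_right]
  ring

/-- `gradient R` is junk where `R` is not differentiable, so differentiability of `R` has to be
recovered: the sandwich `0 ≤ D_R(y‖x) ≤ ⟪∇R y - ∇R x, y - x⟫` makes the first-order remainder
`o(‖y - x‖)`. -/
theorem hasGradientWithinAt_of_bregman_nonneg (hx : x ∈ S)
    (hD : ∀ y ∈ S, ∀ z ∈ S, 0 ≤ bregman R y z) (hc : ContinuousWithinAt (gradient R) S x) :
    HasGradientWithinAt R (gradient R x) S x := by
  rw [hasGradientWithinAt_iff_isLittleO, Asymptotics.isLittleO_iff]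
  intro ε hε
  filter_upwards [Metric.tendsto_nhds.1 hc ε hε, self_mem_nhdsWithin] with y hyε hy
  change ‖bregman R y x‖ ≤ _
  rw [Real.norm_of_nonneg (hD y hy x hx)]
  calc bregman R y x ≤ bregman R y x + bregman R x y := le_add_of_nonneg_right (hD x hx y hy)
    _ = ⟪gradient R y - gradient R x, y - x⟫ := bregman_add_bregman_swap R x y
    _ ≤ ‖gradient R y - gradient R x‖ * ‖y - x‖ := real_inner_le_norm _ _
    _ ≤ ε * ‖y - x‖ := by gcongr; exact (dist_eq_norm (gradient R y) _ ▸ hyε).le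

theorem abs_bregman_sub_half_inner_le (hS : Convex ℝ S) (hx : x ∈ S) (hy : y ∈ S)
    (hD : ∀ y ∈ S, ∀ z ∈ S, 0 ≤ bregman R y z)
    {H : E → E →L[ℝ] E} (hH : ∀ z ∈ S, HasFDerivWithinAt (gradient R) (H z) S z)
    {T : E → E →L[ℝ] E →L[ℝ] E} (hT : ∀ z ∈ S, HasFDerivWithinAt H (T z) S z)
    {M : ℝ} (hTM : ∀ z ∈ S, ‖T z‖ ≤ M) :
    |bregman R y x - 1 / 2 * ⟪y - x, H x (y - x)⟫| ≤ M * ‖y - x‖ ^ 3 / 6 := by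
  set h := y - x
  set c : ℝ → E := fun s => x + s • h
  have hcS : MapsTo c (Icc 0 1) S := fun s hs => hS.add_smul_sub_mem hx hy hs
  have hc (s : ℝ) : HasDerivWithinAt c h (Icc 0 1) s :=
    (((hasDerivAt_id s).smul_const h).const_add x).hasDerivWithinAt.congr_deriv (one_smul ℝ h)
  have hf : ∀ s ∈ Icc (0 : ℝ) 1,
      HasDerivWithinAt (fun s => R (c s)) ⟪gradient R (c s), h⟫ (Icc 0 1) s := fun s hs =>
    ((hasGradientWithinAt_of_bregman_nonneg (hcS hs) hD
      (hH _ (hcS hs)).continuousWithinAt).hasFDerivWithinAt.comp_hasDerivWithinAt s (hc s) hcS)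
  have hg : ∀ s ∈ Icc (0 : ℝ) 1, HasDerivWithinAt (fun s => ⟪gradient R (c s), h⟫)
      ⟪h, H (c s) h⟫ (Icc 0 1) s := fun s hs => by
    simpa [real_inner_comm] using
      ((hH _ (hcS hs)).comp_hasDerivWithinAt s (hc s) hcS).inner ℝ (hasDerivWithinAt_const s _ h)
  have hg' : ∀ s ∈ Icc (0 : ℝ) 1, HasDerivWithinAt (fun s => ⟪h, H (c s) h⟫)
      ⟪h, T (c s) h h⟫ (Icc 0 1) s := fun s hs => by
    simpa using (hasDerivWithinAt_const s _ h).inner ℝ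
      (((hT _ (hcS hs)).comp_hasDerivWithinAt s (hc s) hcS).clm_apply (hasDerivWithinAt_const s _ h))
  have hbd : ∀ s ∈ Icc (0 : ℝ) 1, |⟪h, T (c s) h h⟫| ≤ M * ‖h‖ ^ 3 := fun s hs =>
    calc |⟪h, T (c s) h h⟫| ≤ ‖h‖ * (‖T (c s)‖ * ‖h‖ * ‖h‖) :=
          (abs_real_inner_le_norm _ _).trans (by gcongr; exact (T (c s)).le_opNorm₂ h h)
      _ ≤ ‖h‖ * (M * ‖h‖ * ‖h‖) := by gcongr; exact hTM _ (hcS hs)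
      _ = M * ‖h‖ ^ 3 := by ring
  have htaylor := abs_sub_taylor_two_le zero_le_one hf hg hg' hbd
  simp only [c, zero_smul, add_zero, one_smul, h, add_sub_cancel] at htaylor
  convert htaylor using 2
  · simp only [bregman]
    ring
  · ring

theorem norm_sub_le_of_isMinOn_inner_add_bregman {Y : Set E} {g y₁ : E} {η : ℝ} (hη : 0 < η)
    (hx : x ∈ Y) (hmin : IsMinOn (fun y => ⟪g, y - x⟫ + (1 / η) * bregman R y x) Y y₁)
    (hsc : 1 / 2 * ‖y₁ - x‖ ^ 2 ≤ bregman R y₁ x) :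
    ‖y₁ - x‖ ≤ 2 * η * ‖g‖ := by
  have hle : ⟪g, y₁ - x⟫ + (1 / η) * bregman R y₁ x ≤ 0 := by
    simpa [bregman] using hmin hx
  have hinner : -(‖g‖ * ‖y₁ - x‖) ≤ ⟪g, y₁ - x⟫ :=
    neg_le_of_abs_le (abs_real_inner_le_norm g (y₁ - x))
  have hquad : ‖y₁ - x‖ ^ 2 ≤ 2 * η * ‖g‖ * ‖y₁ - x‖ := by
    have := mul_le_mul_of_nonneg_left hsc (one_div_pos.2 hη).le
    field_simp at this hle
    nlinarith
  by_contra! hfar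
  nlinarith [mul_nonneg hη.le (norm_nonneg g)]

end Bregman

theorem omd_rewritten_local_model_general
    {d : ℕ} (Y : Set (EuclideanSpace ℝ (Fin d)))
    (hYcv : Convex ℝ Y)
    (R : EuclideanSpace ℝ (Fin d) → ℝ)
    (HR : EuclideanSpace ℝ (Fin d) →
      EuclideanSpace ℝ (Fin d) →L[ℝ] EuclideanSpace ℝ (Fin d))
    (hHR : ∀ z ∈ Y, HasFDerivAt (gradient R) (HR z) z)
    (G : ℝ)
    (hRsc : ∀ x ∈ Y, ∀ y ∈ Y, (1 / 2) * ‖x - y‖ ^ 2 ≤ bregman R x y)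
    (T3 : EuclideanSpace ℝ (Fin d) →
      EuclideanSpace ℝ (Fin d) →L[ℝ] EuclideanSpace ℝ (Fin d) →L[ℝ] EuclideanSpace ℝ (Fin d))
    (hT3 : ∀ z ∈ Y, HasFDerivAt HR (T3 z) z) (hT3bd : ∀ z ∈ Y, ‖T3 z‖ ≤ G)
    (η GtF : ℝ) (hη : 0 < η)
    (yt : EuclideanSpace ℝ (Fin d)) (hyt : yt ∈ Y)
    (gtil : EuclideanSpace ℝ (Fin d)) (hgtil : ‖gtil‖ ≤ GtF)
    (yt1 : EuclideanSpace ℝ (Fin d)) (hyt1mem : yt1 ∈ Y)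
    (hyt1 : IsMinOn (fun y => ⟪gtil, y - yt⟫ + (1 / η) * bregman R y yt) Y yt1) :
    yt1 ∈ {y ∈ Y | ‖y - yt‖ ≤ 2 * η * GtF} ∧
    IsMinOn
      (fun y => (⟪gtil, y - yt⟫ + (1 / (2 * η)) * ⟪y - yt, HR yt (y - yt)⟫)
        + (1 / η) * (bregman R y yt - (1 / 2) * ⟪y - yt, HR yt (y - yt)⟫))
      {y ∈ Y | ‖y - yt‖ ≤ 2 * η * GtF} yt1 ∧
    ∀ y ∈ {y ∈ Y | ‖y - yt‖ ≤ 2 * η * GtF},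
      |bregman R y yt - (1 / 2) * ⟪y - yt, HR yt (y - yt)⟫| ≤ (4 / 3) * G * GtF ^ 3 * η ^ 3 := by
  have hG : 0 ≤ G := (norm_nonneg (T3 yt)).trans (hT3bd yt hyt)
  have hD : ∀ y ∈ Y, ∀ z ∈ Y, 0 ≤ bregman R y z := fun y hy z hz =>
    (by positivity : (0 : ℝ) ≤ 1 / 2 * ‖y - z‖ ^ 2).trans (hRsc y hy z hz)
  refine ⟨⟨hyt1mem, ?_⟩, ?_, ?_⟩
  · calc ‖yt1 - yt‖ ≤ 2 * η * ‖gtil‖ :=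
          norm_sub_le_of_isMinOn_inner_add_bregman hη hyt hyt1 (hRsc yt1 hyt1mem yt hyt)
      _ ≤ 2 * η * GtF := by gcongr
  · convert hyt1.on_subset (sep_subset Y _) using 2 with y
    ring
  · rintro y ⟨hy, hyt_near⟩
    calc |bregman R y yt - 1 / 2 * ⟪y - yt, HR yt (y - yt)⟫| ≤ G * ‖y - yt‖ ^ 3 / 6 :=
          abs_bregman_sub_half_inner_le hYcv hyt hy hD (fun z hz => (hHR z hz).hasFDerivWithinAt)
            (fun z hz => (hT3 z hz).hasFDerivWithinAt) hT3bd
      _ ≤ G * (2 * η * GtF) ^ 3 / 6 := by gcongr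
      _ = 4 / 3 * G * GtF ^ 3 * η ^ 3 := by ring

/-- the OMD iterate is a minimizer of the local quadratic model `Φ_t`
perturbed by the Taylor remainder `ε_t`, localized to the set `Y_t`, and the remainder is
of size `O(η³)` on `Y_t`. -/
theorem omd_rewritten_local_model
    {d : ℕ} (Y : Set (EuclideanSpace ℝ (Fin d)))
    (hYne : Y.Nonempty) (hYcv : Convex ℝ Y) (hYcp : IsCompact Y)
    (R : EuclideanSpace ℝ (Fin d) → ℝ)
    (HR : EuclideanSpace ℝ (Fin d) →
      EuclideanSpace ℝ (Fin d) →L[ℝ] EuclideanSpace ℝ (Fin d))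
    (hHR : ∀ z ∈ Y, HasFDerivAt (gradient R) (HR z) z)
    (G : ℝ) (hG : 1 < G)
    (hRsc : ∀ x ∈ Y, ∀ y ∈ Y, (1 / 2) * ‖x - y‖ ^ 2 ≤ bregman R x y)
    (hgradRbd : ∀ z ∈ Y, ‖gradient R z‖ ≤ G)
    (T3 : EuclideanSpace ℝ (Fin d) →
      EuclideanSpace ℝ (Fin d) →L[ℝ] EuclideanSpace ℝ (Fin d) →L[ℝ] EuclideanSpace ℝ (Fin d))
    (hT3 : ∀ z ∈ Y, HasFDerivAt HR (T3 z) z) (hT3bd : ∀ z ∈ Y, ‖T3 z‖ ≤ G)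
    (η GtF : ℝ) (hη : 0 < η) (hGtF : 0 < GtF)
    (yt : EuclideanSpace ℝ (Fin d)) (hyt : yt ∈ Y)
    (gtil : EuclideanSpace ℝ (Fin d)) (hgtil : ‖gtil‖ ≤ GtF)
    (yt1 : EuclideanSpace ℝ (Fin d)) (hyt1mem : yt1 ∈ Y)
    (hyt1 : IsMinOn (fun y => ⟪gtil, y - yt⟫ + (1 / η) * bregman R y yt) Y yt1) :
    yt1 ∈ {y ∈ Y | ‖y - yt‖ ≤ 2 * η * GtF} ∧
    IsMinOn
      (fun y => (⟪gtil, y - yt⟫ + (1 / (2 * η)) * ⟪y - yt, HR yt (y - yt)⟫)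
        + (1 / η) * (bregman R y yt - (1 / 2) * ⟪y - yt, HR yt (y - yt)⟫))
      {y ∈ Y | ‖y - yt‖ ≤ 2 * η * GtF} yt1 ∧
    ∀ y ∈ {y ∈ Y | ‖y - yt‖ ≤ 2 * η * GtF},
      |bregman R y yt - (1 / 2) * ⟪y - yt, HR yt (y - yt)⟫| ≤ (4 / 3) * G * GtF ^ 3 * η ^ 3 :=
  omd_rewritten_local_model_general Y hYcv R HR hHR G hRsc T3 hT3 hT3bd η GtF hη yt hyt gtil hgtil
    yt1 hyt1mem hyt1
end

section
/- Under Assumptions (A1) and (A2), let y_t = q(x_t), let g_t be a vector with ‖g_t‖ ≤ Ĝ_F, set g̃_t = J_q(x_t)^{−⊤} g_t and G̃_F = G Ĝ_F, and let x_{t+1} = argmin_{x∈X} { g_tᵀ(x − x_t) + (1/(2η)) ‖x − x_t‖₂² }. Define Y_t = {y ∈ Y : ‖y − y_t‖₂ ≤ 2η G̃_F}, Φ_t(y) = ⟨g̃_t, y − y_t⟩ + (1/(2η)) (y − y_t)ᵀ ∇²R(y_t) (y − y_t), ε_t^q(y) = q⁻¹(y) − q⁻¹(y_t) − J_q(x_t)⁻¹(y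 − y_t), and ε_t^{OGD}(y) = g_tᵀ ε_t^q(y) + (1/η)( (1/2)‖ε_t^q(y)‖₂² + ⟨J_q(x_t)⁻¹(y − y_t), ε_t^q(y)⟩ ). Then q(x_{t+1}) = argmin_{y∈Y_t} { Φ_t(y) + ε_t^{OGD}(y) }; moreover, for all y ∈ Y_t, ‖ε_t^q(y)‖₂ ≤ 2 G G̃_F² η² and |g_tᵀ ε_t^q(y)| ≤ 2 G̃_F³ η². -/
open scoped RealInnerProductSpace

set_option maxHeartbeats 1000000 in
/-- the OGD iterate mapped to the hidden space, `q(x_{t+1})`, minimizes the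
local quadratic model `Φ_t` perturbed by `ε_t^{OGD}` over the localized set `Y_t`; moreover the
Taylor remainder `ε_t^q` of `q⁻¹` and the linear perturbation `g_tᵀ ε_t^q` are small on `Y_t`.
Here `J_{q⁻¹}(y_t) = J_q(x_t)⁻¹` is expressed via the derivative `Jp` of the inverse map `p`. -/
theorem ogd_rewritten_local_model
    {d : ℕ}
    (X Y : Set (EuclideanSpace ℝ (Fin d)))
    (hXcv : Convex ℝ X) (hXcp : IsCompact X) (hYcv : Convex ℝ Y) (hYcp : IsCompact Y)
    (q p : EuclideanSpace ℝ (Fin d) → EuclideanSpace ℝ (Fin d))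
    (hqbij : Set.BijOn q X Y) (hqp : Set.InvOn p q X Y)
    (hqsmooth : ContDiffOn ℝ (⊤ : ℕ∞) q X)
    (Jq Jp : EuclideanSpace ℝ (Fin d) →
      EuclideanSpace ℝ (Fin d) →L[ℝ] EuclideanSpace ℝ (Fin d))
    (hJq : ∀ x ∈ X, HasFDerivAt q (Jq x) x)
    (hJp : ∀ z ∈ Y, HasFDerivAt p (Jp z) z)
    (hJinv : ∀ x ∈ X, (Jq x).comp (Jp (q x)) = ContinuousLinearMap.id ℝ _ ∧
      (Jp (q x)).comp (Jq x) = ContinuousLinearMap.id ℝ _)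
    (R : EuclideanSpace ℝ (Fin d) → ℝ)
    -- (A1): Hessian-compatible reparameterization
    (hRstrict : StrictConvexOn ℝ Y R)
    (HR : EuclideanSpace ℝ (Fin d) →
      EuclideanSpace ℝ (Fin d) →L[ℝ] EuclideanSpace ℝ (Fin d))
    (hHR : ∀ z ∈ Y, HasFDerivAt (gradient R) (HR z) z)
    (hcompat : ∀ x ∈ X,
      (HR (q x)).comp ((Jq x).comp (ContinuousLinearMap.adjoint (Jq x)))
          = ContinuousLinearMap.id ℝ _ ∧
      ((Jq x).comp (ContinuousLinearMap.adjoint (Jq x))).comp (HR (q x))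
          = ContinuousLinearMap.id ℝ _)
    -- (A2): smoothness of the regularizer and the reparameterization
    (G : ℝ) (hG : 1 < G)
    (hqLip : LipschitzOnWith (Real.toNNReal G) q X)
    (hJpbd : ∀ z ∈ Y, ‖Jp z‖ ≤ G)
    (J2p : EuclideanSpace ℝ (Fin d) →
      EuclideanSpace ℝ (Fin d) →L[ℝ] EuclideanSpace ℝ (Fin d) →L[ℝ] EuclideanSpace ℝ (Fin d))
    (hJ2p : ∀ z ∈ Y, HasFDerivAt Jp (J2p z) z) (hJ2pbd : ∀ z ∈ Y, ‖J2p z‖ ≤ G)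
    (hRsc : ∀ z ∈ Y, ∀ w ∈ Y, (1 / 2) * ‖z - w‖ ^ 2 ≤ bregman R z w)
    (hgradRbd : ∀ z ∈ Y, ‖gradient R z‖ ≤ G)
    (T3 : EuclideanSpace ℝ (Fin d) →
      EuclideanSpace ℝ (Fin d) →L[ℝ] EuclideanSpace ℝ (Fin d) →L[ℝ] EuclideanSpace ℝ (Fin d))
    (hT3 : ∀ z ∈ Y, HasFDerivAt HR (T3 z) z) (hT3bd : ∀ z ∈ Y, ‖T3 z‖ ≤ G)
    (hDRLip : ∀ z ∈ Y, LipschitzOnWith (Real.toNNReal G) (fun w => bregman R z w) Y)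
    -- stepsize, the vector gₜ, its hidden transport g̃ₜ with Jᵀ g̃ = g, and G̃_F = G Ĝ_F
    (η GFhat GtF : ℝ) (hη : 0 < η) (hGFhat : 0 < GFhat) (hGtF : GtF = G * GFhat)
    (xt : EuclideanSpace ℝ (Fin d)) (hxt : xt ∈ X)
    (yt : EuclideanSpace ℝ (Fin d)) (hyt : yt = q xt)
    (g gtil : EuclideanSpace ℝ (Fin d))
    (hgbd : ‖g‖ ≤ GFhat)
    (hgtil : ContinuousLinearMap.adjoint (Jq xt) gtil = g)
    -- the OGD one-step update
    (xt1 : EuclideanSpace ℝ (Fin d)) (hxt1mem : xt1 ∈ X)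
    (hxt1 : IsMinOn (fun x => ⟪g, x - xt⟫ + (1 / (2 * η)) * ‖x - xt‖ ^ 2) X xt1) :
    q xt1 ∈ {y ∈ Y | ‖y - yt‖ ≤ 2 * η * GtF} ∧
    IsMinOn
      (fun y => (⟪gtil, y - yt⟫ + (1 / (2 * η)) * ⟪y - yt, HR yt (y - yt)⟫)
        + (⟪g, p y - p yt - Jp yt (y - yt)⟫
          + (1 / η) * ((1 / 2) * ‖p y - p yt - Jp yt (y - yt)‖ ^ 2
            + ⟪Jp yt (y - yt), p y - p yt - Jp yt (y - yt)⟫)))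
      {y ∈ Y | ‖y - yt‖ ≤ 2 * η * GtF} (q xt1) ∧
    (∀ y ∈ {y ∈ Y | ‖y - yt‖ ≤ 2 * η * GtF},
      ‖p y - p yt - Jp yt (y - yt)‖ ≤ 2 * G * GtF ^ 2 * η ^ 2 ∧
      |⟪g, p y - p yt - Jp yt (y - yt)⟫| ≤ 2 * GtF ^ 3 * η ^ 2) := by
  have hG0 : (0 : ℝ) < G := lt_trans one_pos hG
  have hytY : yt ∈ Y := by rw [hyt]; exact hqbij.mapsTo hxt
  have hpyt : p yt = xt := by rw [hyt]; exact hqp.1 hxt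
  set A := Jq xt with hA
  set B := Jp yt with hB
  have hABid : A.comp B = ContinuousLinearMap.id ℝ _ := by
    rw [hB, hyt]; exact (hJinv xt hxt).1
  have hBAid : B.comp A = ContinuousLinearMap.id ℝ _ := by
    rw [hB, hyt]; exact (hJinv xt hxt).2
  -- adjoint identities
  have hBtAt : (ContinuousLinearMap.adjoint B).comp (ContinuousLinearMap.adjoint A)
      = ContinuousLinearMap.id ℝ _ := by
    rw [← ContinuousLinearMap.adjoint_comp, hABid, ContinuousLinearMap.adjoint_id]
  have hAtBt : (ContinuousLinearMap.adjoint A).comp (ContinuousLinearMap.adjoint B)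
      = ContinuousLinearMap.id ℝ _ := by
    rw [← ContinuousLinearMap.adjoint_comp, hBAid, ContinuousLinearMap.adjoint_id]
  -- HR yt = Bᵀ ∘ B
  have hHRyt : HR yt = (ContinuousLinearMap.adjoint B).comp B := by
    have h1 : (HR yt).comp (A.comp (ContinuousLinearMap.adjoint A))
        = ContinuousLinearMap.id ℝ _ := by
      rw [hyt, hA]; exact (hcompat xt hxt).1
    have h2 : (A.comp (ContinuousLinearMap.adjoint A)).comp
        ((ContinuousLinearMap.adjoint B).comp B) = ContinuousLinearMap.id ℝ _ := by
      calc (A.comp (ContinuousLinearMap.adjoint A)).comp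
            ((ContinuousLinearMap.adjoint B).comp B)
          = A.comp (((ContinuousLinearMap.adjoint A).comp
              (ContinuousLinearMap.adjoint B)).comp B) := by
            rw [ContinuousLinearMap.comp_assoc, ContinuousLinearMap.comp_assoc]
        _ = A.comp B := by rw [hAtBt, ContinuousLinearMap.id_comp]
        _ = ContinuousLinearMap.id ℝ _ := hABid
    calc HR yt = (HR yt).comp (ContinuousLinearMap.id ℝ _) :=
          (ContinuousLinearMap.comp_id _).symm
      _ = (HR yt).comp ((A.comp (ContinuousLinearMap.adjoint A)).comp
            ((ContinuousLinearMap.adjoint B).comp B)) := by rw [h2]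
      _ = ((HR yt).comp (A.comp (ContinuousLinearMap.adjoint A))).comp
            ((ContinuousLinearMap.adjoint B).comp B) :=
          (ContinuousLinearMap.comp_assoc _ _ _).symm
      _ = (ContinuousLinearMap.adjoint B).comp B := by
          rw [h1, ContinuousLinearMap.id_comp]
  have hquad : ∀ w : EuclideanSpace ℝ (Fin d), ⟪w, HR yt w⟫ = ‖B w‖ ^ 2 := by
    intro w
    rw [hHRyt, ContinuousLinearMap.comp_apply, real_inner_comm,
      ContinuousLinearMap.adjoint_inner_left, real_inner_self_eq_norm_sq]
  have hlin : ∀ w : EuclideanSpace ℝ (Fin d), ⟪g, B w⟫ = ⟪gtil, w⟫ := by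
    intro w
    have hABw : A (B w) = w := by
      have := congrArg (fun (T : EuclideanSpace ℝ (Fin d) →L[ℝ] EuclideanSpace ℝ (Fin d))
        => T w) hABid
      simpa using this
    rw [← hgtil, ContinuousLinearMap.adjoint_inner_left, hABw]
  -- the objective in hidden coordinates equals the OGD objective composed with p
  set F : EuclideanSpace ℝ (Fin d) → ℝ :=
    fun x => ⟪g, x - xt⟫ + (1 / (2 * η)) * ‖x - xt‖ ^ 2 with hF
  set Ψ : EuclideanSpace ℝ (Fin d) → ℝ :=
    fun y => (⟪gtil, y - yt⟫ + (1 / (2 * η)) * ⟪y - yt, HR yt (y - yt)⟫)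
        + (⟪g, p y - p yt - Jp yt (y - yt)⟫
          + (1 / η) * ((1 / 2) * ‖p y - p yt - Jp yt (y - yt)‖ ^ 2
            + ⟪Jp yt (y - yt), p y - p yt - Jp yt (y - yt)⟫)) with hΨdef
  have hΨF : ∀ y, Ψ y = F (p y) := by
    intro y
    have h1 : p y - xt = B (y - yt) + (p y - p yt - B (y - yt)) := by
      rw [← hpyt]; abel
    have hηne : η ≠ 0 := ne_of_gt hη
    simp only [hΨdef, hF, hB]
    rw [h1, norm_add_sq_real, inner_add_right, hlin, hquad]
    field_simp
    ring
  have hGtF0 : 0 < GtF := by rw [hGtF]; positivity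
  -- step bound for the OGD update
  have hstep : ‖xt1 - xt‖ ≤ 2 * η * GFhat := by
    have h0 : F xt1 ≤ F xt := isMinOn_iff.mp hxt1 xt hxt
    have hFxt : F xt = 0 := by simp [hF]
    rw [hFxt] at h0
    have hcs : -⟪g, xt1 - xt⟫ ≤ GFhat * ‖xt1 - xt‖ := by
      have h1 : |⟪g, xt1 - xt⟫| ≤ ‖g‖ * ‖xt1 - xt‖ := abs_real_inner_le_norm g _
      have h2 : ‖g‖ * ‖xt1 - xt‖ ≤ GFhat * ‖xt1 - xt‖ :=
        mul_le_mul_of_nonneg_right hgbd (norm_nonneg _)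
      linarith [neg_abs_le ⟪g, xt1 - xt⟫]
    have hsq : ‖xt1 - xt‖ ^ 2 ≤ 2 * η * GFhat * ‖xt1 - xt‖ := by
      have h1 : (1 / (2 * η)) * ‖xt1 - xt‖ ^ 2 ≤ GFhat * ‖xt1 - xt‖ := by
        simp only [hF] at h0; linarith
      have h2 := mul_le_mul_of_nonneg_left h1 (le_of_lt (by positivity : (0:ℝ) < 2 * η))
      have h3 : 2 * η * ((1 / (2 * η)) * ‖xt1 - xt‖ ^ 2) = ‖xt1 - xt‖ ^ 2 := by
        field_simp
      rw [h3] at h2; linarith [h2]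
    nlinarith [norm_nonneg (xt1 - xt), mul_pos (mul_pos two_pos hη) hGFhat]
  -- q xt1 ∈ Y_t
  have hqmem : q xt1 ∈ {y ∈ Y | ‖y - yt‖ ≤ 2 * η * GtF} := by
    refine ⟨hqbij.mapsTo hxt1mem, ?_⟩
    have h1 : dist (q xt1) (q xt) ≤ G * dist xt1 xt := by
      have := hqLip.dist_le_mul xt1 hxt1mem xt hxt
      rwa [Real.coe_toNNReal G (le_of_lt hG0)] at this
    rw [hyt, ← dist_eq_norm]
    calc dist (q xt1) (q xt) ≤ G * dist xt1 xt := h1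
      _ ≤ G * (2 * η * GFhat) := by
          rw [dist_eq_norm]
          exact mul_le_mul_of_nonneg_left hstep (le_of_lt hG0)
      _ = 2 * η * GtF := by rw [hGtF]; ring
  -- Lipschitz bound on Jp over Y
  have hJpLip : ∀ z ∈ Y, ‖Jp z - Jp yt‖ ≤ G * ‖z - yt‖ := fun z hz =>
    hYcv.norm_image_sub_le_of_norm_hasFDerivWithin_le
      (fun w hw => (hJ2p w hw).hasFDerivWithinAt) hJ2pbd hytY hz
  -- second-order Taylor remainder bound
  have htaylor : ∀ y ∈ Y, ‖p y - p yt - Jp yt (y - yt)‖ ≤ G / 2 * ‖y - yt‖ ^ 2 := by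
    intro y hy
    set v := y - yt with hv
    set c : ℝ → EuclideanSpace ℝ (Fin d) := fun t => yt + t • v with hc
    have hmem : ∀ t ∈ Set.Icc (0:ℝ) 1, c t ∈ Y := by
      intro t ht
      have hrw : c t = (1 - t) • yt + t • y := by
        simp only [hc, hv, smul_sub, sub_smul, one_smul]; abel
      rw [hrw]
      exact hYcv hytY hy (by linarith [ht.2]) ht.1 (by ring)
    have hcderiv : ∀ t : ℝ, HasDerivAt c v t := by
      intro t
      simpa [hc] using ((hasDerivAt_id t).smul_const v).const_add yt
    have hD : ∀ t ∈ Set.Icc (0:ℝ) 1,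
        HasDerivAt (fun s => p (c s) - s • (B v)) (Jp (c t) v - B v) t := by
      intro t ht
      have h1 : HasDerivAt (fun s => p (c s)) (Jp (c t) v) t :=
        (hJp (c t) (hmem t ht)).comp_hasDerivAt t (hcderiv t)
      have h2 : HasDerivAt (fun s : ℝ => s • (B v)) (B v) t := by
        simpa using (hasDerivAt_id t).smul_const (B v)
      exact h1.sub h2
    have hJpcont : ContinuousOn (fun t => Jp (c t)) (Set.Icc (0:ℝ) 1) := by
      intro t ht
      exact ((hJ2p (c t) (hmem t ht)).continuousAt.comp
        ((hcderiv t).continuousAt)).continuousWithinAt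
    have hDcont : ContinuousOn (fun t => Jp (c t) v - B v) (Set.Icc (0:ℝ) 1) :=
      (hJpcont.clm_apply continuousOn_const).sub continuousOn_const
    have hint : IntervalIntegrable (fun t => Jp (c t) v - B v) MeasureTheory.volume 0 1 := by
      apply ContinuousOn.intervalIntegrable
      rwa [Set.uIcc_of_le zero_le_one]
    have hFTC := intervalIntegral.integral_eq_sub_of_hasDerivAt
      (f := fun s => p (c s) - s • (B v)) (f' := fun t => Jp (c t) v - B v)
      (fun t ht => hD t (by rwa [Set.uIcc_of_le zero_le_one] at ht)) hint
    have hc1 : c 1 = y := by simp [hc, hv]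
    have hc0 : c 0 = yt := by simp [hc]
    have hεeq : p y - p yt - B v
        = ∫ t in (0:ℝ)..1, (Jp (c t) v - B v) := by
      rw [hFTC]; simp only [hc1, hc0]; simp; abel
    have hnorm : ∀ t ∈ Set.Icc (0:ℝ) 1, ‖Jp (c t) v - B v‖ ≤ G * ‖v‖ ^ 2 * t := by
      intro t ht
      have h1 : Jp (c t) v - B v = (Jp (c t) - B) v := by simp
      rw [h1]
      calc ‖(Jp (c t) - B) v‖ ≤ ‖Jp (c t) - B‖ * ‖v‖ :=
            ContinuousLinearMap.le_opNorm _ _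
        _ ≤ (G * ‖c t - yt‖) * ‖v‖ :=
            mul_le_mul_of_nonneg_right (hJpLip (c t) (hmem t ht)) (norm_nonneg _)
        _ = G * ‖v‖ ^ 2 * t := by
            have h2 : c t - yt = t • v := by simp [hc]
            rw [h2, norm_smul, Real.norm_eq_abs, abs_of_nonneg ht.1]; ring
    have hintnorm : IntervalIntegrable (fun t => ‖Jp (c t) v - B v‖)
        MeasureTheory.volume 0 1 := hint.norm
    have hintbd : IntervalIntegrable (fun t => G * ‖v‖ ^ 2 * t)
        MeasureTheory.volume 0 1 :=
      (continuous_const.mul continuous_id).intervalIntegrable 0 1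
    calc ‖p y - p yt - Jp yt (y - yt)‖
        = ‖∫ t in (0:ℝ)..1, (Jp (c t) v - B v)‖ := by rw [← hv, ← hB, hεeq]
      _ ≤ ∫ t in (0:ℝ)..1, ‖Jp (c t) v - B v‖ :=
          intervalIntegral.norm_integral_le_integral_norm zero_le_one
      _ ≤ ∫ t in (0:ℝ)..1, G * ‖v‖ ^ 2 * t := by
          apply intervalIntegral.integral_mono_on zero_le_one hintnorm hintbd hnorm
      _ = G / 2 * ‖v‖ ^ 2 := by
          rw [intervalIntegral.integral_const_mul, integral_id]; ring
  -- the three claims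
  refine ⟨hqmem, ?_, ?_⟩
  · -- minimality
    rw [isMinOn_iff]
    intro y hy
    obtain ⟨hyY, -⟩ := hy
    show Ψ (q xt1) ≤ Ψ y
    rw [hΨF, hΨF]
    have hpq : p (q xt1) = xt1 := hqp.1 hxt1mem
    rw [hpq]
    obtain ⟨x, hxX, hqx⟩ := hqbij.surjOn hyY
    have hpyX : p y ∈ X := by rw [← hqx, hqp.1 hxX]; exact hxX
    exact isMinOn_iff.mp hxt1 (p y) hpyX
  · intro y hy
    obtain ⟨hyY, hynear⟩ := hy
    have h1 := htaylor y hyY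
    have h2 : ‖y - yt‖ ^ 2 ≤ (2 * η * GtF) ^ 2 := by
      apply pow_le_pow_left₀ (norm_nonneg _) hynear
    have hε : ‖p y - p yt - Jp yt (y - yt)‖ ≤ 2 * G * GtF ^ 2 * η ^ 2 := by
      calc ‖p y - p yt - Jp yt (y - yt)‖ ≤ G / 2 * ‖y - yt‖ ^ 2 := h1
        _ ≤ G / 2 * (2 * η * GtF) ^ 2 :=
            mul_le_mul_of_nonneg_left h2 (by positivity)
        _ = 2 * G * GtF ^ 2 * η ^ 2 := by ring
    refine ⟨hε, ?_⟩
    calc |⟪g, p y - p yt - Jp yt (y - yt)⟫|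
        ≤ ‖g‖ * ‖p y - p yt - Jp yt (y - yt)‖ := abs_real_inner_le_norm _ _
      _ ≤ GFhat * (2 * G * GtF ^ 2 * η ^ 2) := by
          apply mul_le_mul hgbd hε (norm_nonneg _) (le_of_lt hGFhat)
      _ = 2 * GtF ^ 3 * η ^ 2 := by rw [hGtF]; ring
end

section
/- Let K ⊂ ℝ^d be a nonempty closed convex set, let Φ : ℝ^d → ℝ be differentiable and (1/η)-strongly convex, and let ε₁, ε₂ : ℝ^d → ℝ be differentiable. If y₁ = argmin_{y∈K} { Φ(y) + ε₁(y) } and y₂ = argmin_{y∈K} { Φ(y) + ε₂(y) }, then ‖y₁ − y₂‖ ≤ η ‖∇ε₂(y₂) − ∇ε₁(y₁)‖. -/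
open scoped RealInnerProductSpace

/-! Test the first-order condition of each minimizer at the other one and add the two
inequalities: the monotonicity term of `∇Φ` is bounded by the gradient gap of the
perturbations, while strong convexity bounds it below by `‖y₁ - y₂‖² / η`. Cauchy–Schwarz
finishes. -/

section

variable {E : Type*} [NormedAddCommGroup E] [InnerProductSpace ℝ E]

theorem real_inner_sub_le_of_inner_add_nonneg {a₁ a₂ b₁ b₂ x₁ x₂ : E}
    (h₁ : 0 ≤ ⟪a₁ + b₁, x₂ - x₁⟫) (h₂ : 0 ≤ ⟪a₂ + b₂, x₁ - x₂⟫) :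
    ⟪a₁ - a₂, x₁ - x₂⟫ ≤ ⟪b₂ - b₁, x₁ - x₂⟫ := by
  rw [← neg_sub x₁ x₂, inner_neg_right, inner_add_left] at h₁
  rw [inner_add_left] at h₂
  rw [inner_sub_left, inner_sub_left]
  linarith

theorem norm_le_mul_norm_of_inv_mul_sq_le_inner {η : ℝ} (hη : 0 < η) {v x : E}
    (h : (1 / η) * ‖x‖ ^ 2 ≤ ⟪v, x⟫) : ‖x‖ ≤ η * ‖v‖ := by
  have hle : ‖x‖ * ‖x‖ ≤ η * ‖v‖ * ‖x‖ := by
    have := h.trans (real_inner_le_norm v x)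
    rw [one_div, ← div_eq_inv_mul, div_le_iff₀ hη] at this
    linarith
  rcases (norm_nonneg x).eq_or_lt with hx | hx
  · rw [← hx]
    exact mul_nonneg hη.le (norm_nonneg v)
  · exact le_of_mul_le_mul_right hle hx

end

theorem ogd_omd_minimizer_distance_general
    {E : Type*} [NormedAddCommGroup E] [InnerProductSpace ℝ E] [CompleteSpace E]
    (K : Set E)
    (η : ℝ) (hη : 0 < η)
    (Φ ε₁ ε₂ : E → ℝ)
    (hsc : ∀ u v : E, (1 / η) * ‖u - v‖ ^ 2 ≤ ⟪gradient Φ u - gradient Φ v, u - v⟫)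
    (y₁ y₂ : E) (hy₁K : y₁ ∈ K) (hy₂K : y₂ ∈ K)
    (hfoc₁ : ∀ w ∈ K, 0 ≤ ⟪gradient Φ y₁ + gradient ε₁ y₁, w - y₁⟫)
    (hfoc₂ : ∀ w ∈ K, 0 ≤ ⟪gradient Φ y₂ + gradient ε₂ y₂, w - y₂⟫) :
    ‖y₁ - y₂‖ ≤ η * ‖gradient ε₂ y₂ - gradient ε₁ y₁‖ := by
  refine norm_le_mul_norm_of_inv_mul_sq_le_inner hη ?_
  calc (1 / η) * ‖y₁ - y₂‖ ^ 2
      ≤ ⟪gradient Φ y₁ - gradient Φ y₂, y₁ - y₂⟫ := hsc y₁ y₂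
    _ ≤ ⟪gradient ε₂ y₂ - gradient ε₁ y₁, y₁ - y₂⟫ :=
      real_inner_sub_le_of_inner_add_nonneg (hfoc₁ y₂ hy₂K) (hfoc₂ y₁ hy₁K)

/-- minimizers of two perturbations of a strongly convex function over a
closed convex set are close, quantitatively in terms of the gradients of the perturbations. -/
theorem ogd_omd_minimizer_distance
    {E : Type*} [NormedAddCommGroup E] [InnerProductSpace ℝ E] [CompleteSpace E]
    (K : Set E) (hKne : K.Nonempty) (hKcl : IsClosed K) (hKcv : Convex ℝ K)
    (η : ℝ) (hη : 0 < η)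
    (Φ ε₁ ε₂ : E → ℝ)
    (hΦ : Differentiable ℝ Φ) (hε₁ : Differentiable ℝ ε₁) (hε₂ : Differentiable ℝ ε₂)
    (hsc : ∀ u v : E, (1 / η) * ‖u - v‖ ^ 2 ≤ ⟪gradient Φ u - gradient Φ v, u - v⟫)
    (y₁ y₂ : E) (hy₁K : y₁ ∈ K) (hy₂K : y₂ ∈ K)
    (hy₁ : IsMinOn (fun y => Φ y + ε₁ y) K y₁)
    (hy₂ : IsMinOn (fun y => Φ y + ε₂ y) K y₂)
    (hfoc₁ : ∀ w ∈ K, 0 ≤ ⟪gradient Φ y₁ + gradient ε₁ y₁, w - y₁⟫)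
    (hfoc₂ : ∀ w ∈ K, 0 ≤ ⟪gradient Φ y₂ + gradient ε₂ y₂, w - y₂⟫) :
    ‖y₁ - y₂‖ ≤ η * ‖gradient ε₂ y₂ - gradient ε₁ y₁‖ :=
  ogd_omd_minimizer_distance_general K η hη Φ ε₁ ε₂ hsc y₁ y₂ hy₁K hy₂K hfoc₁ hfoc₂
end

section
/- Under Assumptions (A1) and (A2) with G ≥ 1, let y_t = q(x_t), let g_t be a vector with ‖g_t‖ ≤ Ĝ_F, let x_{t+1} = argmin_{x∈X} { g_tᵀ(x − x_t) + (1/(2η)) ‖x − x_t‖₂² }, and define ε_t^q(y) = q⁻¹(y) − q⁻¹(y_t) − J_q(x_t)⁻¹(y − y_t) and ε_t^{OGD}(y) = g_tᵀ ε_t^q(y) + (1/η)( (1/2)‖ε_t^q(y)‖₂² + ⟨J_q(x_t)⁻¹(y − y_t), ε_t^q(y)⟩ ). Then ‖∇ε_t^{OGD}(q(x_{t+1}))‖ ≤ G⁵ (3 Ĝ_F² + Ĝ_F³ η) η. -/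
open scoped RealInnerProductSpace

/-!
By first-order optimality over the convex set `X`, the proximal step moves by at most `η‖g‖`,
so `q` moves by at most `r = Gη‖g‖`. On the convex set `Y` the bound on the second derivative
of `q⁻¹` makes `Jp` `G`-Lipschitz and bounds the Taylor remainder `ε_t^q(q(x_{t+1}))` by `G r²`.
Each term of the gradient is then a product of such norms, and the total is
`G²ηĜ² + 2G⁴ηĜ² + G⁵η²Ĝ³ ≤ G⁵(3Ĝ² + Ĝ³η)η` since `G ≥ 1`.
-/

section Proximal

variable {E : Type*} [NormedAddCommGroup E] [InnerProductSpace ℝ E]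

theorem inner_add_inner_nonneg_of_isMinOn_proximal {X : Set E} (hX : Convex ℝ X)
    {g x₀ x₁ y : E} {η : ℝ} (hx₁ : x₁ ∈ X) (hy : y ∈ X)
    (hmin : IsMinOn (fun x => ⟪g, x - x₀⟫ + (1 / (2 * η)) * ‖x - x₀‖ ^ 2) X x₁) :
    0 ≤ ⟪g, y - x₁⟫ + (1 / η) * ⟪x₁ - x₀, y - x₁⟫ := by
  have hsub : HasFDerivAt (fun x => x - x₀) (ContinuousLinearMap.id ℝ E) x₁ :=
    (hasFDerivAt_id x₁).sub_const x₀
  have hderiv := ((innerSL ℝ g).hasFDerivAt.comp x₁ hsub).add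
    (hsub.norm_sq.const_mul (1 / (2 * η)))
  convert hmin.localize.hasFDerivWithinAt_nonneg hderiv.hasFDerivWithinAt
    (sub_mem_posTangentConeAt_of_segment_subset (hX.segment_subset hx₁ hy)) using 1
  simp only [ContinuousLinearMap.comp_id, add_apply, innerSL_apply_apply, smul_apply,
    smul_eq_mul, nsmul_eq_mul]
  ring

theorem norm_sub_le_of_isMinOn_proximal {X : Set E} (hX : Convex ℝ X)
    {g x₀ x₁ : E} {η : ℝ} (hη : 0 < η) (hx₀ : x₀ ∈ X) (hx₁ : x₁ ∈ X)
    (hmin : IsMinOn (fun x => ⟪g, x - x₀⟫ + (1 / (2 * η)) * ‖x - x₀‖ ^ 2) X x₁) :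
    ‖x₁ - x₀‖ ≤ η * ‖g‖ := by
  have hopt := inner_add_inner_nonneg_of_isMinOn_proximal hX hx₁ hx₀ hmin
  have hself : ⟪x₁ - x₀, x₀ - x₁⟫ = -‖x₁ - x₀‖ ^ 2 := by
    rw [← neg_sub x₁ x₀, inner_neg_right, real_inner_self_eq_norm_sq]
  have hcs : ⟪g, x₀ - x₁⟫ ≤ ‖g‖ * ‖x₁ - x₀‖ := norm_sub_rev x₀ x₁ ▸ real_inner_le_norm _ _
  have hsq : ‖x₁ - x₀‖ ^ 2 ≤ η * ‖g‖ * ‖x₁ - x₀‖ := by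
    rw [hself, one_div, mul_neg, ← sub_eq_add_neg, sub_nonneg, inv_mul_le_iff₀ hη] at hopt
    nlinarith
  rcases (norm_nonneg (x₁ - x₀)).eq_or_lt with h0 | h0
  · rw [← h0]; positivity
  · nlinarith

end Proximal

theorem norm_image_sub_sub_fderiv_le {E F : Type*} [NormedAddCommGroup E] [NormedSpace ℝ E]
    [NormedAddCommGroup F] [NormedSpace ℝ F] {f : E → F} {f' : E → E →L[ℝ] F}
    {f'' : E → E →L[ℝ] E →L[ℝ] F} {s : Set E} {C : ℝ} {x y : E} (hs : Convex ℝ s)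
    (hf : ∀ z ∈ s, HasFDerivWithinAt f (f' z) s z)
    (hf' : ∀ z ∈ s, HasFDerivWithinAt f' (f'' z) s z)
    (hf'' : ∀ z ∈ s, ‖f'' z‖ ≤ C) (hx : x ∈ s) (hy : y ∈ s) :
    ‖f y - f x - f' x (y - x)‖ ≤ C * ‖y - x‖ ^ 2 := by
  have hseg : segment ℝ x y ⊆ s := hs.segment_subset hx hy
  have hC : 0 ≤ C := (norm_nonneg (f'' x)).trans (hf'' x hx)
  rw [sq, ← mul_assoc]
  refine (convex_segment x y).norm_image_sub_le_of_norm_hasFDerivWithin_le'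
    (fun z hz => (hf z (hseg hz)).mono hseg) (fun z hz => ?_)
    (left_mem_segment ℝ x y) (right_mem_segment ℝ x y)
  calc ‖f' z - f' x‖ ≤ C * ‖z - x‖ :=
        hs.norm_image_sub_le_of_norm_hasFDerivWithin_le hf' hf'' hx (hseg hz)
    _ ≤ C * ‖y - x‖ := by gcongr; exact norm_sub_le_of_mem_segment hz

section Adjoint

variable {E F : Type*} [NormedAddCommGroup E] [InnerProductSpace ℝ E] [CompleteSpace E]
  [NormedAddCommGroup F] [InnerProductSpace ℝ F] [CompleteSpace F]

theorem ContinuousLinearMap.norm_adjoint_apply_le (A : E →L[ℝ] F) (v : F) :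
    ‖adjoint A v‖ ≤ ‖A‖ * ‖v‖ :=
  (LinearIsometryEquiv.norm_map adjoint A) ▸ (adjoint A).le_opNorm v

theorem norm_adjoint_add_smul_adjoint_le (A B : E →L[ℝ] F) (g u v : F) {c : ℝ} (hc : 0 ≤ c) :
    ‖ContinuousLinearMap.adjoint A g
        + c • (ContinuousLinearMap.adjoint A u + ContinuousLinearMap.adjoint B u
          + ContinuousLinearMap.adjoint A v)‖
      ≤ ‖A‖ * ‖g‖ + c * (‖A‖ * ‖u‖ + ‖B‖ * ‖u‖ + ‖A‖ * ‖v‖) := by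
  refine (norm_add_le _ _).trans ?_
  rw [norm_smul, Real.norm_of_nonneg hc]
  gcongr
  · exact A.norm_adjoint_apply_le g
  · refine norm_add₃_le.trans ?_
    gcongr <;> exact ContinuousLinearMap.norm_adjoint_apply_le _ _

end Adjoint

/-- The displayed vector is the gradient of `ε_t^{OGD}` at `q(x_{t+1})`, with `q⁻¹ = p` and
`J_q(x_t)⁻¹ = Jp yt`. -/
theorem norm_grad_eps_ogd_general
    {d : ℕ}
    (X Y : Set (EuclideanSpace ℝ (Fin d)))
    (hXcv : Convex ℝ X) (hYcv : Convex ℝ Y)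
    (q p : EuclideanSpace ℝ (Fin d) → EuclideanSpace ℝ (Fin d))
    (hqbij : Set.BijOn q X Y)
    (Jp : EuclideanSpace ℝ (Fin d) →
      EuclideanSpace ℝ (Fin d) →L[ℝ] EuclideanSpace ℝ (Fin d))
    (hJp : ∀ z ∈ Y, HasFDerivAt p (Jp z) z)
    -- (A2) parts used here: Lipschitz reparameterization and bounded derivatives of q⁻¹
    (G : ℝ) (hG : 1 ≤ G)
    (hqLip : LipschitzOnWith (Real.toNNReal G) q X)
    (hJpbd : ∀ z ∈ Y, ‖Jp z‖ ≤ G)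
    (J2p : EuclideanSpace ℝ (Fin d) →
      EuclideanSpace ℝ (Fin d) →L[ℝ] EuclideanSpace ℝ (Fin d) →L[ℝ] EuclideanSpace ℝ (Fin d))
    (hJ2p : ∀ z ∈ Y, HasFDerivAt Jp (J2p z) z) (hJ2pbd : ∀ z ∈ Y, ‖J2p z‖ ≤ G)
    -- stepsize and the bounded vector gₜ
    (η GFhat : ℝ) (hη : 0 < η)
    (xt : EuclideanSpace ℝ (Fin d)) (hxt : xt ∈ X)
    (yt : EuclideanSpace ℝ (Fin d)) (hyt : yt = q xt)
    (g : EuclideanSpace ℝ (Fin d)) (hgbd : ‖g‖ ≤ GFhat)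
    -- the OGD one-step update
    (xt1 : EuclideanSpace ℝ (Fin d)) (hxt1mem : xt1 ∈ X)
    (hxt1 : IsMinOn (fun x => ⟪g, x - xt⟫ + (1 / (2 * η)) * ‖x - xt‖ ^ 2) X xt1) :
    ‖(ContinuousLinearMap.adjoint (Jp (q xt1) - Jp yt)) g
      + (1 / η) • ((ContinuousLinearMap.adjoint (Jp (q xt1) - Jp yt))
            (p (q xt1) - p yt - Jp yt (q xt1 - yt))
          + (ContinuousLinearMap.adjoint (Jp yt))
            (p (q xt1) - p yt - Jp yt (q xt1 - yt))
          + (ContinuousLinearMap.adjoint (Jp (q xt1) - Jp yt)) (Jp yt (q xt1 - yt)))‖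
      ≤ G ^ 5 * (3 * GFhat ^ 2 + GFhat ^ 3 * η) * η := by
  have hG₀ : 0 ≤ G := zero_le_one.trans hG
  have hGF : 0 ≤ GFhat := (norm_nonneg g).trans hgbd
  have hyt_mem : yt ∈ Y := hyt ▸ hqbij.mapsTo hxt
  have hyt1_mem : q xt1 ∈ Y := hqbij.mapsTo hxt1mem
  set r := G * (η * GFhat)
  have hr : ‖q xt1 - yt‖ ≤ r := calc
    ‖q xt1 - yt‖ ≤ G * ‖xt1 - xt‖ := by
      simpa [hyt, Real.coe_toNNReal G hG₀] using
        lipschitzOnWith_iff_norm_sub_le.mp hqLip hxt1mem hxt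
    _ ≤ G * (η * GFhat) := by
      gcongr
      exact (norm_sub_le_of_isMinOn_proximal hXcv hη hxt hxt1mem hxt1).trans (by gcongr)
  have hJp_diff : ‖Jp (q xt1) - Jp yt‖ ≤ G * r :=
    (hYcv.norm_image_sub_le_of_norm_hasFDerivWithin_le
      (fun z hz => (hJ2p z hz).hasFDerivWithinAt) hJ2pbd hyt_mem hyt1_mem).trans (by gcongr)
  have hremainder : ‖p (q xt1) - p yt - Jp yt (q xt1 - yt)‖ ≤ G * r ^ 2 :=
    (norm_image_sub_sub_fderiv_le hYcv (fun z hz => (hJp z hz).hasFDerivWithinAt)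
      (fun z hz => (hJ2p z hz).hasFDerivWithinAt) hJ2pbd hyt_mem hyt1_mem).trans (by gcongr)
  have hlinear : ‖Jp yt (q xt1 - yt)‖ ≤ G * r :=
    ((Jp yt).le_opNorm _).trans (mul_le_mul (hJpbd yt hyt_mem) hr (norm_nonneg _) hG₀)
  have hG25 : G ^ 2 ≤ G ^ 5 := pow_le_pow_right₀ hG (by norm_num)
  have hG45 : G ^ 4 ≤ G ^ 5 := pow_le_pow_right₀ hG (by norm_num)
  have hηGF : 0 ≤ η * GFhat ^ 2 := by positivity
  calc _ ≤ _ := norm_adjoint_add_smul_adjoint_le _ _ _ _ _ (by positivity)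
    _ ≤ G * r * GFhat + 1 / η * (G * r * (G * r ^ 2) + G * (G * r ^ 2) + G * r * (G * r)) := by
        gcongr
        exact hJpbd yt hyt_mem
    _ = G ^ 2 * η * GFhat ^ 2 + 2 * G ^ 4 * η * GFhat ^ 2 + G ^ 5 * η ^ 2 * GFhat ^ 3 := by
        field_simp
        ring
    _ ≤ G ^ 5 * (3 * GFhat ^ 2 + GFhat ^ 3 * η) * η := by
        nlinarith [mul_le_mul_of_nonneg_right hG25 hηGF, mul_le_mul_of_nonneg_right hG45 hηGF]

/-- bound on the gradient of the OGD perturbation `ε_t^{OGD}` evaluated at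
the mapped OGD iterate `q(x_{t+1})`.  Writing `ε_t^q(y) = q⁻¹(y) - q⁻¹(y_t) - J_q(x_t)⁻¹(y-y_t)`
(with `J_q(x_t)⁻¹ = J_{q⁻¹}(y_t) = Jp y_t`), the gradient of
`ε_t^{OGD}(y) = g_tᵀ ε_t^q(y) + (1/η)(½‖ε_t^q(y)‖² + ⟨J_q(x_t)⁻¹(y-y_t), ε_t^q(y)⟩)` at
`y = q(x_{t+1})` equals the displayed vector, whose norm is at most `G⁵(3Ĝ_F² + Ĝ_F³η)η`. -/
theorem norm_grad_eps_ogd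
    {d : ℕ}
    (X Y : Set (EuclideanSpace ℝ (Fin d)))
    (hXcv : Convex ℝ X) (hXcp : IsCompact X) (hYcv : Convex ℝ Y) (hYcp : IsCompact Y)
    (q p : EuclideanSpace ℝ (Fin d) → EuclideanSpace ℝ (Fin d))
    (hqbij : Set.BijOn q X Y) (hqp : Set.InvOn p q X Y)
    (Jq Jp : EuclideanSpace ℝ (Fin d) →
      EuclideanSpace ℝ (Fin d) →L[ℝ] EuclideanSpace ℝ (Fin d))
    (hJq : ∀ x ∈ X, HasFDerivAt q (Jq x) x)
    (hJp : ∀ z ∈ Y, HasFDerivAt p (Jp z) z)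
    (hJinv : ∀ x ∈ X, (Jq x).comp (Jp (q x)) = ContinuousLinearMap.id ℝ _ ∧
      (Jp (q x)).comp (Jq x) = ContinuousLinearMap.id ℝ _)
    -- (A2) parts used here: Lipschitz reparameterization and bounded derivatives of q⁻¹
    (G : ℝ) (hG : 1 ≤ G)
    (hqLip : LipschitzOnWith (Real.toNNReal G) q X)
    (hJpbd : ∀ z ∈ Y, ‖Jp z‖ ≤ G)
    (J2p : EuclideanSpace ℝ (Fin d) →
      EuclideanSpace ℝ (Fin d) →L[ℝ] EuclideanSpace ℝ (Fin d) →L[ℝ] EuclideanSpace ℝ (Fin d))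
    (hJ2p : ∀ z ∈ Y, HasFDerivAt Jp (J2p z) z) (hJ2pbd : ∀ z ∈ Y, ‖J2p z‖ ≤ G)
    -- stepsize and the bounded vector gₜ
    (η GFhat : ℝ) (hη : 0 < η) (hGFhat : 0 < GFhat)
    (xt : EuclideanSpace ℝ (Fin d)) (hxt : xt ∈ X)
    (yt : EuclideanSpace ℝ (Fin d)) (hyt : yt = q xt)
    (g : EuclideanSpace ℝ (Fin d)) (hgbd : ‖g‖ ≤ GFhat)
    -- the OGD one-step update
    (xt1 : EuclideanSpace ℝ (Fin d)) (hxt1mem : xt1 ∈ X)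
    (hxt1 : IsMinOn (fun x => ⟪g, x - xt⟫ + (1 / (2 * η)) * ‖x - xt‖ ^ 2) X xt1) :
    ‖(ContinuousLinearMap.adjoint (Jp (q xt1) - Jp yt)) g
      + (1 / η) • ((ContinuousLinearMap.adjoint (Jp (q xt1) - Jp yt))
            (p (q xt1) - p yt - Jp yt (q xt1 - yt))
          + (ContinuousLinearMap.adjoint (Jp yt))
            (p (q xt1) - p yt - Jp yt (q xt1 - yt))
          + (ContinuousLinearMap.adjoint (Jp (q xt1) - Jp yt)) (Jp yt (q xt1 - yt)))‖
      ≤ G ^ 5 * (3 * GFhat ^ 2 + GFhat ^ 3 * η) * η :=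
  norm_grad_eps_ogd_general X Y hXcv hYcv q p hqbij Jp hJp G hG hqLip hJpbd J2p hJ2p hJ2pbd η GFhat
    hη xt hxt yt hyt g hgbd xt1 hxt1mem hxt1
end

section
/- Let Y ⊂ ℝ^d be convex compact, let each h_t : Y → ℝ be convex with ‖∇h_t(z)‖ ≤ G for all z ∈ Y, let R be 1-strongly convex with sup_{z,z'∈Y} D_R(z‖z') ≤ D₁ and with w ↦ D_R(z‖w) G-Lipschitz for every z ∈ Y. Suppose an algorithm produces iterates z_{t+1} = r_{t+1} + argmin_{y∈Y} { ∇h_t(z_t)ᵀ(y − z_t) + (1/η) D_R(y‖z_t) } with ‖r_{t+1}‖₂ ≤ C_η for all t. Then its regret satisfies Σ_{t=1}^T h_t(z_t) − min_{z∈Y} Σ_{t=1}^T h_t(z) ≤ C_η T G / η + D₁ / η + η G² T / 2. -/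
/-!
The heart of the argument is the three-point inequality for one mirror step,
`η ⟪g, y - u⟫ ≤ D(u ‖ z) - D(u ‖ y) - D(y ‖ z)` for the minimiser `y`. Since `R` is not assumed
differentiable, it does not come from a first-order optimality condition: one compares `y` with
the points `w = y + s (u - y)` of the segment towards `u`, and the Lipschitz bound on `D(u ‖ ·)`
makes `D(w ‖ y) = O(s²)`, so letting `s → 0` leaves the linear terms. Adding convexity of `h_t`,
Young's inequality `η G a - a² / 2 ≤ η² G² / 2` with `a = ‖y - z‖`, and the Lipschitz bound again
for the perturbation, `D(u ‖ z_{t+1}) ≤ D(u ‖ y_{t+1}) + G Cη`, each round costs at most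
`η G² / 2 + G Cη / η` plus a telescoping difference of `D(u ‖ z_t) / η`.
-/

open scoped RealInnerProductSpace

open scoped NNReal

theorem nonneg_of_forall_Ioc_add_mul_nonneg {a b : ℝ}
    (h : ∀ s ∈ Set.Ioc (0 : ℝ) 1, 0 ≤ a + b * s) : 0 ≤ a := by
  have hlim : Filter.Tendsto (fun s : ℝ => a + b * s) (nhdsWithin 0 (Set.Ioi 0)) (nhds a) := by
    have : Continuous (fun s : ℝ => a + b * s) := by fun_prop
    simpa using (this.tendsto 0).mono_left nhdsWithin_le_nhds
  exact ge_of_tendsto hlim (Filter.eventually_of_mem (Ioc_mem_nhdsGT zero_lt_one) h)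

theorem sum_Icc_le_of_le_add_sub {a φ : ℕ → ℝ} {c : ℝ} (h : ∀ t, a t ≤ c + (φ t - φ (t + 1)))
    (T : ℕ) : ∑ t ∈ Finset.Icc 1 T, a t ≤ T * c + (φ 1 - φ (T + 1)) := by
  induction T with
  | zero => simp
  | succ T ih =>
    rw [Finset.sum_Icc_succ_top (by omega)]
    push_cast
    linarith [h (T + 1)]

section Bregman

variable {E : Type*} [NormedAddCommGroup E] [InnerProductSpace ℝ E] [CompleteSpace E]

theorem ConvexOn.inner_gradient_le_sub {Y : Set E} {f : E → ℝ} (hf : ConvexOn ℝ Y f) {x u : E}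
    (hx : x ∈ Y) (hu : u ∈ Y) (hfx : DifferentiableAt ℝ f x) :
    ⟪gradient f x, u - x⟫ ≤ f u - f x := by
  have hline := hf.comp_affineMap (AffineMap.lineMap (k := ℝ) x u)
  have hderiv : HasDerivAt (f ∘ AffineMap.lineMap (k := ℝ) x u) ⟪gradient f x, u - x⟫ 0 :=
    hfx.hasGradientAt.hasFDerivAt.comp_hasDerivAt_of_eq (0 : ℝ)
      AffineMap.hasDerivAt_lineMap (AffineMap.lineMap_apply_zero x u).symm
  simpa [slope_def_field] using
    hline.le_slope_of_hasDerivAt (by simpa) (by simpa) zero_lt_one hderiv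

theorem bregman_three_point (R : E → ℝ) (w y z : E) :
    bregman R w z = bregman R w y + bregman R y z + ⟪gradient R y - gradient R z, w - y⟫ := by
  simp only [bregman, inner_sub_left, inner_sub_right]
  ring

theorem bregman_lineMap_eq (R : E → ℝ) (y u : E) (s : ℝ) :
    bregman R (AffineMap.lineMap y u s) y =
      s * (bregman R u y - bregman R u (AffineMap.lineMap y u s))
        - (1 - s) * bregman R y (AffineMap.lineMap y u s) := by
  simp only [bregman, AffineMap.lineMap_apply_module', add_sub_cancel_right,
    sub_add_eq_sub_sub, inner_sub_right, inner_smul_right]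
  ring

theorem bregman_lineMap_le {Y : Set E} {R : E → ℝ} {K : ℝ≥0} {y u : E}
    (hLip : LipschitzOnWith K (bregman R u) Y) (hy : y ∈ Y) {s : ℝ} (hs₀ : 0 ≤ s) (hs₁ : s ≤ 1)
    (hw : AffineMap.lineMap y u s ∈ Y) (hnn : 0 ≤ bregman R y (AffineMap.lineMap y u s)) :
    bregman R (AffineMap.lineMap y u s) y ≤ K * ‖u - y‖ * s ^ 2 := by
  have hdiff : bregman R u y - bregman R u (AffineMap.lineMap y u s) ≤ K * ‖u - y‖ * s := by
    have := (hLip.dist_le_mul y hy _ hw)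
    rw [dist_left_lineMap, Real.dist_eq, dist_eq_norm', Real.norm_of_nonneg hs₀] at this
    linarith [le_abs_self (bregman R u y - bregman R u (AffineMap.lineMap y u s))]
  rw [bregman_lineMap_eq]
  nlinarith [mul_le_mul_of_nonneg_left hdiff hs₀, mul_nonneg (sub_nonneg.2 hs₁) hnn]

theorem inner_le_bregman_sub_of_isMinOn {Y : Set E} (hY : Convex ℝ Y) {R : E → ℝ}
    (hR : ∀ x ∈ Y, ∀ y ∈ Y, 0 ≤ bregman R x y) {K : ℝ≥0}
    (hLip : ∀ u ∈ Y, LipschitzOnWith K (bregman R u) Y) {g z y : E} {η : ℝ} (hη : 0 < η)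
    (hy : y ∈ Y) (hmin : IsMinOn (fun w => ⟪g, w - z⟫ + (1 / η) * bregman R w z) Y y)
    {u : E} (hu : u ∈ Y) :
    η * ⟪g, y - u⟫ ≤ bregman R u z - bregman R u y - bregman R y z := by
  set X := ⟪gradient R y - gradient R z, u - y⟫
  suffices 0 ≤ η * ⟪g, u - y⟫ + X by
    rw [bregman_three_point R u y z, ← neg_sub u y, inner_neg_right]
    linarith
  refine nonneg_of_forall_Ioc_add_mul_nonneg (b := K * ‖u - y‖) fun s ⟨hs₀, hs₁⟩ => ?_
  set w := AffineMap.lineMap y u s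
  have hw : w ∈ Y := hY.lineMap_mem hy hu ⟨hs₀.le, hs₁⟩
  have hwy : w - y = s • (u - y) := by simp [w, AffineMap.lineMap_apply_module']
  have hinner : ⟪g, w - z⟫ = ⟪g, y - z⟫ + s * ⟪g, u - y⟫ := by
    rw [← sub_add_sub_cancel w y z, hwy, inner_add_right, real_inner_smul_right, add_comm]
  have hsplit : bregman R w z = bregman R w y + bregman R y z + s * X := by
    rw [bregman_three_point R w y z, hwy, inner_smul_right]
  have hD := bregman_lineMap_le (hLip u hu) hy hs₀.le hs₁ hw (hR y hy w hw)
  have hstep : 0 ≤ s * ⟪g, u - y⟫ + (bregman R w y + s * X) / η := by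
    have hle : ⟪g, y - z⟫ + 1 / η * bregman R y z ≤ ⟪g, w - z⟫ + 1 / η * bregman R w z := hmin hw
    rw [hinner, hsplit] at hle
    have : (bregman R w y + s * X) / η
        = 1 / η * (bregman R w y + bregman R y z + s * X) - 1 / η * bregman R y z := by ring
    linarith
  have hscaled : η * (s * ⟪g, u - y⟫ + (bregman R w y + s * X) / η)
      = s * (η * ⟪g, u - y⟫ + X) + bregman R w y := by
    field_simp
    ring
  have hscaled_nonneg := mul_nonneg hη.le hstep
  rw [hscaled] at hscaled_nonneg
  refine (mul_nonneg_iff_of_pos_left hs₀).mp ?_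
  nlinarith [hD]

theorem bregman_nonneg_of_half_sq_norm_le {Y : Set E} {R : E → ℝ}
    (hRsc : ∀ x ∈ Y, ∀ y ∈ Y, (1 / 2) * ‖x - y‖ ^ 2 ≤ bregman R x y) {x y : E} (hx : x ∈ Y)
    (hy : y ∈ Y) : 0 ≤ bregman R x y :=
  (by positivity : (0 : ℝ) ≤ 1 / 2 * ‖x - y‖ ^ 2).trans (hRsc x hx y hy)

theorem perturbed_mirror_step_le {Y : Set E} (hY : Convex ℝ Y) {R : E → ℝ}
    (hRsc : ∀ x ∈ Y, ∀ y ∈ Y, (1 / 2) * ‖x - y‖ ^ 2 ≤ bregman R x y) {K : ℝ≥0}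
    (hLip : ∀ u ∈ Y, LipschitzOnWith K (bregman R u) Y) {f : E → ℝ} (hf : ConvexOn ℝ Y f)
    {G η C : ℝ} (hη : 0 < η) {z y z' u : E} (hz : z ∈ Y) (hy : y ∈ Y) (hz' : z' ∈ Y)
    (hu : u ∈ Y) (hfz : DifferentiableAt ℝ f z) (hgrad : ‖gradient f z‖ ≤ G)
    (hmin : IsMinOn (fun w => ⟪gradient f z, w - z⟫ + (1 / η) * bregman R w z) Y y)
    (hz'y : ‖z' - y‖ ≤ C) :
    f z - f u ≤ η * G ^ 2 / 2 + K * C / η + (bregman R u z - bregman R u z') / η := by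
  set g := gradient f z
  set a := ‖y - z‖
  have hsub : f z - f u ≤ ⟪g, z - u⟫ := by
    have := hf.inner_gradient_le_sub hz hu hfz
    rw [← neg_sub z u, inner_neg_right] at this
    linarith
  have hopt := inner_le_bregman_sub_of_isMinOn hY
    (fun x hx y hy => bregman_nonneg_of_half_sq_norm_le hRsc hx hy) hLip hη hy hmin hu
  have hsc : 1 / 2 * a ^ 2 ≤ bregman R y z := hRsc y hy z hz
  have hcs : ⟪g, z - y⟫ ≤ G * a :=
    (real_inner_le_norm _ _).trans (by rw [norm_sub_rev]; gcongr)
  have hpert : bregman R u z' ≤ bregman R u y + K * C := by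
    have := (hLip u hu).dist_le_mul z' hz' y hy
    rw [Real.dist_eq, dist_eq_norm] at this
    have : (K : ℝ) * ‖z' - y‖ ≤ K * C := by gcongr
    linarith [le_abs_self (bregman R u z' - bregman R u y)]
  suffices η * (f z - f u) ≤ η ^ 2 * G ^ 2 / 2 + K * C + (bregman R u z - bregman R u z') by
    refine le_of_mul_le_mul_left (this.trans_eq ?_) hη
    field_simp
  calc η * (f z - f u) ≤ η * ⟪g, z - y⟫ + η * ⟪g, y - u⟫ := by
        rw [← mul_add, ← inner_add_right, sub_add_sub_cancel]
        gcongr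
    _ ≤ η * (G * a) + (bregman R u z - bregman R u y - 1 / 2 * a ^ 2) := by
        gcongr
        linarith
    _ ≤ η ^ 2 * G ^ 2 / 2 + K * C + (bregman R u z - bregman R u z') := by
        nlinarith [sq_nonneg (a - η * G)]

end Bregman

theorem perturbed_omd_regret_general
    {E : Type*} [NormedAddCommGroup E] [InnerProductSpace ℝ E] [CompleteSpace E]
    (Y : Set E) (hYcv : Convex ℝ Y)
    (G η D₁ Cη : ℝ) (hG : 1 < G) (hη : 0 < η)
    (h : ℕ → E → ℝ)
    (hconv : ∀ t, ConvexOn ℝ Y (h t))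
    (hdiff : ∀ t, ∀ z ∈ Y, DifferentiableAt ℝ (h t) z)
    (hgrad : ∀ t, ∀ z ∈ Y, ‖gradient (h t) z‖ ≤ G)
    (R : E → ℝ)
    (hRsc : ∀ x ∈ Y, ∀ y ∈ Y, (1 / 2) * ‖x - y‖ ^ 2 ≤ bregman R x y)
    (hD1bd : ∀ z ∈ Y, ∀ z' ∈ Y, bregman R z z' ≤ D₁)
    (hDRLip : ∀ z ∈ Y, LipschitzOnWith (Real.toNNReal G) (fun w => bregman R z w) Y)
    (T : ℕ)
    (z y r : ℕ → E)
    (hzY : ∀ t, z t ∈ Y)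
    (hymem : ∀ t, y (t + 1) ∈ Y)
    (hymin : ∀ t, IsMinOn
      (fun w => ⟪gradient (h t) (z t), w - z t⟫ + (1 / η) * bregman R w (z t)) Y (y (t + 1)))
    (hzr : ∀ t, z (t + 1) = r (t + 1) + y (t + 1))
    (hr : ∀ t, ‖r (t + 1)‖ ≤ Cη) :
    ∀ u ∈ Y, ∑ t ∈ Finset.Icc 1 T, (h t (z t) - h t u)
      ≤ Cη * T * G / η + D₁ / η + η * G ^ 2 * T / 2 := by
  intro u hu
  have hK : (Real.toNNReal G : ℝ) = G := Real.coe_toNNReal G (by linarith)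
  have hstep (t : ℕ) : h t (z t) - h t u ≤ (η * G ^ 2 / 2 + G * Cη / η)
      + (bregman R u (z t) / η - bregman R u (z (t + 1)) / η) := by
    have := perturbed_mirror_step_le (C := Cη) hYcv hRsc hDRLip (hconv t) hη (hzY t) (hymem t)
      (hzY (t + 1)) hu (hdiff t _ (hzY t)) (hgrad t _ (hzY t)) (hymin t)
      (by rw [hzr t, add_sub_cancel_right]; exact hr t)
    rwa [hK, sub_div] at this
  calc ∑ t ∈ Finset.Icc 1 T, (h t (z t) - h t u)
      ≤ T * (η * G ^ 2 / 2 + G * Cη / η)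
        + (bregman R u (z 1) / η - bregman R u (z (T + 1)) / η) :=
        sum_Icc_le_of_le_add_sub hstep T
    _ ≤ T * (η * G ^ 2 / 2 + G * Cη / η) + D₁ / η := by
        rw [← sub_div]
        gcongr
        linarith [hD1bd u hu (z 1) (hzY 1),
          bregman_nonneg_of_half_sq_norm_le hRsc hu (hzY (T + 1))]
    _ = Cη * T * G / η + D₁ / η + η * G ^ 2 * T / 2 := by ring

/-- perturbed online mirror descent regret bound,
Lemma 6 of Ghai–Lu–Hazan 2022. -/
theorem perturbed_omd_regret
    {E : Type*} [NormedAddCommGroup E] [InnerProductSpace ℝ E] [CompleteSpace E]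
    (Y : Set E) (hYne : Y.Nonempty) (hYcv : Convex ℝ Y) (hYcp : IsCompact Y)
    (G η D₁ Cη : ℝ) (hG : 1 < G) (hη : 0 < η) (hD₁ : 0 < D₁) (hCη : 0 ≤ Cη)
    (h : ℕ → E → ℝ)
    (hconv : ∀ t, ConvexOn ℝ Y (h t))
    (hdiff : ∀ t, ∀ z ∈ Y, DifferentiableAt ℝ (h t) z)
    (hgrad : ∀ t, ∀ z ∈ Y, ‖gradient (h t) z‖ ≤ G)
    (R : E → ℝ)
    (hRsc : ∀ x ∈ Y, ∀ y ∈ Y, (1 / 2) * ‖x - y‖ ^ 2 ≤ bregman R x y)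
    (hD1bd : ∀ z ∈ Y, ∀ z' ∈ Y, bregman R z z' ≤ D₁)
    (hDRLip : ∀ z ∈ Y, LipschitzOnWith (Real.toNNReal G) (fun w => bregman R z w) Y)
    (T : ℕ) (hT : 1 ≤ T)
    (z y r : ℕ → E)
    (hzY : ∀ t, z t ∈ Y)
    (hymem : ∀ t, y (t + 1) ∈ Y)
    (hymin : ∀ t, IsMinOn
      (fun w => ⟪gradient (h t) (z t), w - z t⟫ + (1 / η) * bregman R w (z t)) Y (y (t + 1)))
    (hzr : ∀ t, z (t + 1) = r (t + 1) + y (t + 1))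
    (hr : ∀ t, ‖r (t + 1)‖ ≤ Cη) :
    ∀ u ∈ Y, ∑ t ∈ Finset.Icc 1 T, (h t (z t) - h t u)
      ≤ Cη * T * G / η + D₁ / η + η * G ^ 2 * T / 2 :=
  perturbed_omd_regret_general Y hYcv G η D₁ Cη hG hη h hconv hdiff hgrad R hRsc hD1bd hDRLip T z y
    r hzY hymem hymin hzr hr
end

section
/- Let F = (P, Q) be a C¹ vector field on a compact neighborhood U of the horizontal segment E = {(x, b) : x ∈ [a, a+α]} ⊂ ℝ², let η > 0, n = ⌊α/η⌋, and let z₀, …, z_n ∈ U satisfy z₀ = (a, b) and z_{k+1} = z_k + η e₁ + r_k with ‖r_k‖ ≤ C η² for 0 ≤ k ≤ n−1, where e₁ = (1,0). Then there exists a constant C′ depending only on F, U, a, b, α and C (and not on η) such that | Σ_{k=0}^{n−1} ⟨F(z_k), z_{k+1} − z_k⟩ − ∫_a^{a+α} P(x, b) dx | ≤ C′ η. -/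
open scoped RealInnerProductSpace

/-- The point `(x, y) ∈ ℝ²` viewed in `EuclideanSpace ℝ (Fin 2)`. -/
noncomputable def pt (x y : ℝ) : EuclideanSpace ℝ (Fin 2) :=
  (WithLp.equiv 2 (Fin 2 → ℝ)).symm ![x, y]

/-! The trajectory stays within `k C η² ≤ α C η` of the points `(a + kη, b)` of the edge. For
`η` small these lie in a compact convex neighbourhood of the edge on which `F` is Lipschitz, so the
increment `⟪F z_k, z_{k+1} - z_k⟫` differs from `η P(a + kη, b)` by `O(η²)`, and the left Riemann
sum of the Lipschitz function `x ↦ P(x, b)` differs from its integral by `O(η)`. For `η` large,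
the sum and the integral are both `O(1) = O(η)` because `F` is bounded on `U`. -/

open Set Finset intervalIntegral MeasureTheory Metric
open scoped NNReal

lemma nat_mul_le_of_le_floor_div {α η : ℝ} (hα : 0 ≤ α) (hη : 0 < η) {k : ℕ}
    (hk : k ≤ ⌊α / η⌋₊) : k * η ≤ α :=
  (le_div_iff₀ hη).1 ((Nat.cast_le.2 hk).trans (Nat.floor_le (div_nonneg hα hη.le)))

lemma add_nat_mul_mem_Icc {a α η : ℝ} (hα : 0 ≤ α) (hη : 0 < η) {k : ℕ} (hk : k ≤ ⌊α / η⌋₊) :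
    a + k * η ∈ Icc a (a + α) :=
  ⟨le_add_of_nonneg_right (by positivity), by linarith [nat_mul_le_of_le_floor_div hα hη hk]⟩

lemma norm_sub_add_mul_smul_le {E : Type*} [SeminormedAddCommGroup E] [NormedSpace ℝ E]
    {z r : ℕ → E} {p e : E} {a η ρ : ℝ} {n : ℕ} (hz0 : z 0 = p + a • e)
    (hstep : ∀ k < n, z (k + 1) = z k + η • e + r k) (hr : ∀ k < n, ‖r k‖ ≤ ρ) :
    ∀ k ≤ n, ‖z k - (p + (a + k * η) • e)‖ ≤ k * ρ := by
  intro k hk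
  induction k with
  | zero => simp [hz0]
  | succ k ih =>
    have hk' : k < n := hk
    calc ‖z (k + 1) - (p + (a + (k + 1 : ℕ) * η) • e)‖
        = ‖(z k - (p + (a + k * η) • e)) + r k‖ := by
          rw [hstep k hk']; push_cast; congr 1; module
      _ ≤ k * ρ + ρ := norm_add_le_of_le (ih hk'.le) (hr k hk')
      _ = (k + 1 : ℕ) * ρ := by push_cast; ring

lemma le_max_mul_of_le_of_le {x η η₀ A B B' : ℝ} (hη : 0 < η) (hη₀ : 0 < η₀) (hB : 0 ≤ B)
    (hsmall : η ≤ η₀ → x ≤ A * η) (hlarge : x ≤ B + B' * η) :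
    x ≤ max A (B / η₀ + B') * η := by
  rcases le_or_gt η η₀ with hle | hgt
  · exact (hsmall hle).trans (by gcongr; exact le_max_left _ _)
  · have hB : B ≤ B / η₀ * η := by
      rw [div_mul_eq_mul_div, le_div_iff₀ hη₀]; gcongr
    calc x ≤ (B / η₀ + B') * η := by linarith
      _ ≤ max A (B / η₀ + B') * η := by gcongr; exact le_max_right _ _

theorem ContDiffOn.exists_lipschitzOnWith_cthickening {E G : Type*} [NormedAddCommGroup E]
    [NormedSpace ℝ E] [ProperSpace E] [NormedAddCommGroup G] [NormedSpace ℝ G] {U s : Set E}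
    {F : E → G} (hF : ContDiffOn ℝ 1 F U) (hs : IsCompact s) (hs' : Convex ℝ s)
    (hsU : s ⊆ interior U) :
    ∃ δ > 0, cthickening δ s ⊆ U ∧ ∃ L, LipschitzOnWith L F (cthickening δ s) := by
  obtain ⟨δ, hδ, hδU⟩ := hs.exists_cthickening_subset_open isOpen_interior hsU
  have hKU : cthickening δ s ⊆ U := hδU.trans interior_subset
  exact ⟨δ, hδ, hKU, (hF.mono hKU).exists_lipschitzOnWith one_ne_zero (hs'.cthickening δ)
    hs.cthickening⟩

lemma abs_integral_sub_mul_le_of_lipschitzOnWith {g : ℝ → ℝ} {L : ℝ≥0} {x η : ℝ} (hη : 0 ≤ η)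
    (hg : LipschitzOnWith L g (Icc x (x + η))) :
    |(∫ t in x..x + η, g t) - η * g x| ≤ L * η ^ 2 := by
  have hint : IntervalIntegrable g volume x (x + η) :=
    hg.continuousOn.intervalIntegrable_of_Icc (by linarith)
  have hle : ∀ t ∈ uIoc x (x + η), ‖g t - g x‖ ≤ L * η := by
    intro t ht
    rw [uIoc_of_le (by linarith)] at ht
    have hdist := hg.dist_le_mul t ⟨ht.1.le, ht.2⟩ x ⟨le_rfl, by linarith⟩
    rw [Real.dist_eq, Real.dist_eq, abs_of_pos (sub_pos.2 ht.1)] at hdist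
    rw [Real.norm_eq_abs]
    exact hdist.trans (mul_le_mul_of_nonneg_left (by linarith [ht.2]) L.2)
  calc |(∫ t in x..x + η, g t) - η * g x| = ‖∫ t in x..x + η, (g t - g x)‖ := by
        rw [integral_sub hint intervalIntegrable_const, intervalIntegral.integral_const,
          smul_eq_mul, add_sub_cancel_left, Real.norm_eq_abs]
    _ ≤ L * η * |x + η - x| := norm_integral_le_of_norm_le_const hle
    _ = L * η ^ 2 := by rw [add_sub_cancel_left, abs_of_nonneg hη]; ring

theorem abs_sum_mul_sub_integral_le_of_lipschitzOnWith {g : ℝ → ℝ} {L : ℝ≥0} {M a α η : ℝ}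
    (hα : 0 ≤ α) (hη : 0 < η) (hg : LipschitzOnWith L g (Icc a (a + α)))
    (hgM : ∀ x ∈ Icc a (a + α), |g x| ≤ M) :
    |∑ k ∈ range ⌊α / η⌋₊, η * g (a + k * η) - ∫ x in a..a + α, g x| ≤ (L * α + M) * η := by
  set n := ⌊α / η⌋₊
  set t : ℕ → ℝ := fun k => a + k * η with ht
  have ht_mem : ∀ k ≤ n, t k ∈ Icc a (a + α) := fun k hk => add_nat_mul_mem_Icc hα hη hk
  have hint : ∀ u ∈ Icc a (a + α), ∀ v ∈ Icc a (a + α), IntervalIntegrable g volume u v :=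
    fun u hu v hv => (hg.continuousOn.mono (uIcc_subset_Icc hu hv)).intervalIntegrable
  have hsplit : ∫ x in a..a + α, g x =
      ∑ k ∈ range n, (∫ x in t k..t (k + 1), g x) + ∫ x in t n..a + α, g x := by
    rw [sum_integral_adjacent_intervals fun k hk => hint _ (ht_mem k hk.le) _ (ht_mem (k + 1) hk),
      integral_add_adjacent_intervals (hint _ (ht_mem 0 (Nat.zero_le n)) _ (ht_mem n le_rfl))
        (hint _ (ht_mem n le_rfl) _ ⟨by linarith, le_rfl⟩)]
    simp [ht]
  have hcell : ∀ k ∈ range n, |η * g (t k) - ∫ x in t k..t (k + 1), g x| ≤ L * η ^ 2 := by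
    intro k hk
    have hk := mem_range.1 hk
    have hsucc : t (k + 1) = t k + η := by simp only [ht]; push_cast; ring
    rw [abs_sub_comm, hsucc]
    exact abs_integral_sub_mul_le_of_lipschitzOnWith hη.le (hg.mono
      (Icc_subset_Icc (ht_mem k hk.le).1 (hsucc ▸ (ht_mem (k + 1) hk).2)))
  have htail : |∫ x in t n..a + α, g x| ≤ M * η := by
    have htn := ht_mem n le_rfl
    have hle : ∀ x ∈ uIoc (t n) (a + α), ‖g x‖ ≤ M := fun x hx => by
      rw [uIoc_of_le htn.2] at hx
      exact hgM x ⟨htn.1.trans hx.1.le, hx.2⟩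
    have hlen : |a + α - t n| ≤ η := by
      rw [abs_of_nonneg (sub_nonneg.2 htn.2)]
      simp only [ht]; nlinarith [(div_lt_iff₀ hη).1 (Nat.lt_floor_add_one (α / η))]
    calc |∫ x in t n..a + α, g x| ≤ M * |a + α - t n| := norm_integral_le_of_norm_le_const hle
      _ ≤ M * η := mul_le_mul_of_nonneg_left hlen ((abs_nonneg _).trans (hgM _ htn))
  calc |∑ k ∈ range n, η * g (t k) - ∫ x in a..a + α, g x|
      = |∑ k ∈ range n, (η * g (t k) - ∫ x in t k..t (k + 1), g x) - ∫ x in t n..a + α, g x| := by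
        rw [hsplit, sum_sub_distrib]; ring_nf
    _ ≤ ∑ k ∈ range n, |η * g (t k) - ∫ x in t k..t (k + 1), g x| + |∫ x in t n..a + α, g x| :=
        (abs_sub _ _).trans (by gcongr; exact abs_sum_le_sum_abs _ _)
    _ ≤ n * (L * η ^ 2) + M * η := by
        gcongr
        simpa using sum_le_card_nsmul _ _ _ hcell
    _ ≤ (L * α + M) * η := by
        nlinarith [mul_le_mul_of_nonneg_right (nat_mul_le_of_le_floor_div hα hη le_rfl)
          (by positivity : (0 : ℝ) ≤ L * η)]

section InnerProductSpace

variable {E : Type*} [NormedAddCommGroup E] [InnerProductSpace ℝ E]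

lemma abs_inner_sub_inner_le {F : E → E} {s : Set E} {L : ℝ≥0} (hF : LipschitzOnWith L F s)
    {y w e : E} (hy : y ∈ s) (hw : w ∈ s) (he : ‖e‖ = 1) :
    |⟪F y, e⟫ - ⟪F w, e⟫| ≤ L * ‖y - w‖ := by
  rw [← inner_sub_left]
  calc |⟪F y - F w, e⟫| ≤ ‖F y - F w‖ * ‖e‖ := abs_real_inner_le_norm _ _
    _ ≤ L * ‖y - w‖ := by rw [he, mul_one]; exact hF.norm_sub_le hy hw

lemma abs_inner_smul_add_sub_le {F : E → E} {s : Set E} {L : ℝ≥0} (hF : LipschitzOnWith L F s)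
    {y w e r : E} (hy : y ∈ s) (hw : w ∈ s) (he : ‖e‖ = 1) {η : ℝ} (hη : 0 ≤ η) :
    |⟪F y, η • e + r⟫ - η * ⟪F w, e⟫| ≤ η * (L * ‖y - w‖) + ‖F y‖ * ‖r‖ := by
  calc |⟪F y, η • e + r⟫ - η * ⟪F w, e⟫| = |η * (⟪F y, e⟫ - ⟪F w, e⟫) + ⟪F y, r⟫| := by
        rw [inner_add_right, real_inner_smul_right]; ring_nf
    _ ≤ |η * (⟪F y, e⟫ - ⟪F w, e⟫)| + |⟪F y, r⟫| := abs_add_le _ _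
    _ ≤ η * (L * ‖y - w‖) + ‖F y‖ * ‖r‖ := by
        rw [abs_mul, abs_of_nonneg hη]
        exact add_le_add (by gcongr; exact abs_inner_sub_inner_le hF hy hw he)
          (abs_real_inner_le_norm _ _)

theorem abs_sum_inner_sub_integral_le_of_lipschitzOnWith {s : Set E} {F : E → E} {L : ℝ≥0}
    {M : ℝ} (hFL : LipschitzOnWith L F s) (hFM : ∀ y ∈ s, ‖F y‖ ≤ M) {p e : E} (he : ‖e‖ = 1)
    {a α C η : ℝ} (hα : 0 ≤ α) (hC : 0 ≤ C) (hη : 0 < η)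
    (hseg : ∀ x ∈ Icc a (a + α), p + x • e ∈ s) {z r : ℕ → E} (hz0 : z 0 = p + a • e)
    (hzs : ∀ k ≤ ⌊α / η⌋₊, z k ∈ s) (hstep : ∀ k < ⌊α / η⌋₊, z (k + 1) = z k + η • e + r k)
    (hr : ∀ k < ⌊α / η⌋₊, ‖r k‖ ≤ C * η ^ 2) :
    |∑ k ∈ range ⌊α / η⌋₊, ⟪F (z k), z (k + 1) - z k⟫ - ∫ x in a..a + α, ⟪F (p + x • e), e⟫|
      ≤ (L * C * α ^ 2 + M * C * α + L * α + M) * η := by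
  set n := ⌊α / η⌋₊
  set g : ℝ → ℝ := fun x => ⟪F (p + x • e), e⟫
  have hgL : LipschitzOnWith L g (Icc a (a + α)) := LipschitzOnWith.of_dist_le_mul
    fun x hx y hy => by
      refine (abs_inner_sub_inner_le hFL (hseg x hx) (hseg y hy) he).trans_eq ?_
      rw [add_sub_add_left_eq_sub, ← sub_smul, norm_smul, he, mul_one, Real.dist_eq,
        Real.norm_eq_abs]
  have hgM : ∀ x ∈ Icc a (a + α), |g x| ≤ M := fun x hx =>
    (abs_real_inner_le_norm _ _).trans (by rw [he, mul_one]; exact hFM _ (hseg x hx))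
  have hterm : ∀ k ∈ range n, |⟪F (z k), z (k + 1) - z k⟫ - η * g (a + k * η)|
      ≤ (L * C * α + M * C) * η ^ 2 := by
    intro k hk
    have hk := mem_range.1 hk
    have hdrift := norm_sub_add_mul_smul_le hz0 hstep hr k hk.le
    rw [hstep k hk, add_assoc, add_sub_cancel_left]
    refine (abs_inner_smul_add_sub_le hFL (hzs k hk.le)
      (hseg _ (add_nat_mul_mem_Icc hα hη hk.le)) he hη.le).trans ?_
    have hkη := nat_mul_le_of_le_floor_div hα hη hk.le
    have hMr : ‖F (z k)‖ * ‖r k‖ ≤ M * (C * η ^ 2) :=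
      mul_le_mul (hFM _ (hzs k hk.le)) (hr k hk) (norm_nonneg _)
        ((norm_nonneg _).trans (hFM _ (hzs k hk.le)))
    have hLd : η * (L * ‖z k - (p + (a + k * η) • e)‖) ≤ η * (L * (α * (C * η))) := by
      gcongr
      calc _ ≤ k * (C * η ^ 2) := hdrift
        _ = k * η * (C * η) := by ring
        _ ≤ α * (C * η) := by gcongr
    linarith
  have hsum : |∑ k ∈ range n, ⟪F (z k), z (k + 1) - z k⟫ - ∑ k ∈ range n, η * g (a + k * η)|
      ≤ (L * C * α ^ 2 + M * C * α) * η := by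
    rw [← sum_sub_distrib]
    calc _ ≤ n * ((L * C * α + M * C) * η ^ 2) := (abs_sum_le_sum_abs _ _).trans
          (by simpa using sum_le_card_nsmul _ _ _ hterm)
      _ = n * η * ((L * C * α + M * C) * η) := by ring
      _ ≤ α * ((L * C * α + M * C) * η) := by
          have hM : 0 ≤ M := (norm_nonneg _).trans (hFM _ (hseg a ⟨le_rfl, by linarith⟩))
          gcongr
          exact nat_mul_le_of_le_floor_div hα hη le_rfl
      _ = (L * C * α ^ 2 + M * C * α) * η := by ring
  have hRiemann := abs_sum_mul_sub_integral_le_of_lipschitzOnWith hα hη hgL hgM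
  calc _ ≤ |∑ k ∈ range n, ⟪F (z k), z (k + 1) - z k⟫ - ∑ k ∈ range n, η * g (a + k * η)|
        + |∑ k ∈ range n, η * g (a + k * η) - ∫ x in a..a + α, g x| := abs_sub_le _ _ _
    _ ≤ _ := by linarith

theorem abs_sum_inner_sub_integral_le_of_norm_le {U : Set E} {F : E → E} {M : ℝ}
    (hFM : ∀ y ∈ U, ‖F y‖ ≤ M) {p e : E} (he : ‖e‖ = 1) {a α C η : ℝ} (hα : 0 ≤ α)
    (hC : 0 ≤ C) (hη : 0 < η) (hseg : ∀ x ∈ Icc a (a + α), p + x • e ∈ U) {z r : ℕ → E}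
    (hzU : ∀ k ≤ ⌊α / η⌋₊, z k ∈ U) (hstep : ∀ k < ⌊α / η⌋₊, z (k + 1) = z k + η • e + r k)
    (hr : ∀ k < ⌊α / η⌋₊, ‖r k‖ ≤ C * η ^ 2) :
    |∑ k ∈ range ⌊α / η⌋₊, ⟪F (z k), z (k + 1) - z k⟫ - ∫ x in a..a + α, ⟪F (p + x • e), e⟫|
      ≤ 2 * M * α + M * C * α * η := by
  set n := ⌊α / η⌋₊
  have hM : 0 ≤ M := (norm_nonneg _).trans (hFM _ (hseg a ⟨le_rfl, by linarith⟩))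
  have hterm : ∀ k ∈ range n, |⟪F (z k), z (k + 1) - z k⟫| ≤ M * (η + C * η ^ 2) := by
    intro k hk
    have hk := mem_range.1 hk
    have hinc : ‖z (k + 1) - z k‖ ≤ η + C * η ^ 2 := by
      rw [hstep k hk, add_assoc, add_sub_cancel_left]
      refine (norm_add_le _ _).trans (add_le_add ?_ (hr k hk))
      rw [norm_smul, he, mul_one, Real.norm_of_nonneg hη.le]
    exact (abs_real_inner_le_norm _ _).trans
      (mul_le_mul (hFM _ (hzU k hk.le)) hinc (norm_nonneg _) hM)
  have hsum : |∑ k ∈ range n, ⟪F (z k), z (k + 1) - z k⟫| ≤ M * α + M * C * α * η :=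
    calc _ ≤ n * (M * (η + C * η ^ 2)) := (abs_sum_le_sum_abs _ _).trans
          (by simpa using sum_le_card_nsmul _ _ _ hterm)
      _ = n * η * (M * (1 + C * η)) := by ring
      _ ≤ α * (M * (1 + C * η)) := by gcongr; exact nat_mul_le_of_le_floor_div hα hη le_rfl
      _ = M * α + M * C * α * η := by ring
  have hint : |∫ x in a..a + α, ⟪F (p + x • e), e⟫| ≤ M * α := by
    have hle : ∀ x ∈ uIoc a (a + α), ‖⟪F (p + x • e), e⟫‖ ≤ M := fun x hx => by
      rw [uIoc_of_le (by linarith)] at hx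
      exact (norm_inner_le_norm _ _).trans
        (by rw [he, mul_one]; exact hFM _ (hseg x ⟨hx.1.le, hx.2⟩))
    calc _ ≤ M * |a + α - a| := norm_integral_le_of_norm_le_const hle
      _ = M * α := by rw [add_sub_cancel_left, abs_of_nonneg hα]
  calc _ ≤ _ := abs_sub _ _
    _ ≤ 2 * M * α + M * C * α * η := by linarith

theorem exists_abs_sum_inner_sub_integral_le [FiniteDimensional ℝ E] {U : Set E}
    (hU : IsCompact U) {F : E → E} (hF : ContDiffOn ℝ 1 F U) {p e : E} (he : ‖e‖ = 1)
    {a α C : ℝ} (hα : 0 < α) (hC : 0 < C) (hseg : ∀ x ∈ Icc a (a + α), p + x • e ∈ interior U) :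
    ∃ C' : ℝ, ∀ η : ℝ, 0 < η → ∀ z r : ℕ → E, z 0 = p + a • e →
      (∀ k ≤ ⌊α / η⌋₊, z k ∈ U) → (∀ k < ⌊α / η⌋₊, z (k + 1) = z k + η • e + r k) →
      (∀ k < ⌊α / η⌋₊, ‖r k‖ ≤ C * η ^ 2) →
      |∑ k ∈ range ⌊α / η⌋₊, ⟪F (z k), z (k + 1) - z k⟫ - ∫ x in a..a + α, ⟪F (p + x • e), e⟫|
        ≤ C' * η := by
  obtain ⟨γ, hγ⟩ : ∃ γ : ℝ →ᵃ[ℝ] E, ∀ x, γ x = p + x • e :=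
    ⟨AffineMap.lineMap p (p + e), fun x => by
      rw [AffineMap.lineMap_apply_module', add_sub_cancel_left, add_comm]⟩
  set S := γ '' Icc a (a + α)
  have hSγ : ∀ x ∈ Icc a (a + α), p + x • e ∈ S := fun x hx => hγ x ▸ mem_image_of_mem γ hx
  obtain ⟨δ, hδ, hKU, L, hL⟩ := hF.exists_lipschitzOnWith_cthickening
    (isCompact_Icc.image γ.continuous_of_finiteDimensional) ((convex_Icc _ _).affine_image γ)
    (image_subset_iff.2 fun x hx => by simpa only [Set.mem_preimage, hγ] using hseg x hx)
  obtain ⟨M, hM⟩ := hU.exists_bound_of_continuousOn hF.continuousOn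
  have hM0 : 0 ≤ M := (norm_nonneg _).trans (hM _ (interior_subset
    (hseg a (left_mem_Icc.2 (le_add_of_nonneg_right hα.le)))))
  refine ⟨max (L * C * α ^ 2 + M * C * α + L * α + M) (2 * M * α / (δ / (α * C)) + M * C * α),
    fun η hη z r hz0 hzU hstep hr => le_max_mul_of_le_of_le hη (by positivity) (by positivity)
      (fun hsmall => ?_) (abs_sum_inner_sub_integral_le_of_norm_le hM he hα.le hC.le hη
        (fun x hx => interior_subset (hseg x hx)) hzU hstep hr)⟩
  refine abs_sum_inner_sub_integral_le_of_lipschitzOnWith hL (fun y hy => hM y (hKU hy)) he hα.le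
    hC.le hη (fun x hx => self_subset_cthickening S (hSγ x hx)) hz0 (fun k hk => ?_) hstep hr
  refine mem_cthickening_of_dist_le _ _ δ S (hSγ _ (add_nat_mul_mem_Icc hα.le hη hk)) ?_
  rw [dist_eq_norm]
  calc _ ≤ k * (C * η ^ 2) := norm_sub_add_mul_smul_le hz0 hstep hr k hk
    _ = k * η * (C * η) := by ring
    _ ≤ α * (C * (δ / (α * C))) := by gcongr; exact nat_mul_le_of_le_floor_div hα.le hη hk
    _ = δ := by field_simp

end InnerProductSpace

lemma pt_eq_add_smul (x y : ℝ) : pt x y = pt 0 y + x • pt 1 0 := by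
  ext i; fin_cases i <;> simp [pt]

lemma norm_pt_one_zero : ‖pt 1 0‖ = 1 := by
  simp [pt, EuclideanSpace.norm_eq, Fin.sum_univ_two]

lemma inner_pt_one_zero (v : EuclideanSpace ℝ (Fin 2)) : ⟪v, pt 1 0⟫ = v 0 := by
  simp [pt, PiLp.inner_apply, Fin.sum_univ_two]

/-- horizontal-edge Riemann sum approximation: for a `C¹` vector field
`F = (P, Q)` on a compact neighborhood `U` of a horizontal segment, a discrete trajectory
performing `n = ⌊α/η⌋` steps `z_{k+1} = z_k + η e₁ + r_k` with `‖r_k‖ ≤ C η²` approximates the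
edge integral `∫_a^{a+α} P(x,b) dx` up to `O(η)`, with a constant independent of `η`. -/
theorem horizontal_edge_riemann_approx
    (U : Set (EuclideanSpace ℝ (Fin 2))) (hUcp : IsCompact U)
    (a b α C : ℝ) (hα : 0 < α) (hC : 0 < C)
    (F : EuclideanSpace ℝ (Fin 2) → EuclideanSpace ℝ (Fin 2))
    (hF : ContDiffOn ℝ 1 F U)
    (hseg : ∀ x ∈ Set.Icc a (a + α), pt x b ∈ interior U) :
    ∃ C' : ℝ, ∀ η : ℝ, 0 < η → ∀ z r : ℕ → EuclideanSpace ℝ (Fin 2),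
      z 0 = pt a b →
      (∀ k ≤ Nat.floor (α / η), z k ∈ U) →
      (∀ k < Nat.floor (α / η), z (k + 1) = z k + η • pt 1 0 + r k) →
      (∀ k < Nat.floor (α / η), ‖r k‖ ≤ C * η ^ 2) →
      |(∑ k ∈ Finset.range (Nat.floor (α / η)), ⟪F (z k), z (k + 1) - z k⟫)
          - ∫ x in a..(a + α), (F (pt x b)) 0| ≤ C' * η := by
  obtain ⟨C', hC'⟩ := exists_abs_sum_inner_sub_integral_le hUcp hF norm_pt_one_zero hα hC
    fun x hx => pt_eq_add_smul x b ▸ hseg x hx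
  refine ⟨C', fun η hη z r hz0 hzU hstep hr => ?_⟩
  simpa only [← pt_eq_add_smul, inner_pt_one_zero] using
    hC' η hη z r (hz0.trans (pt_eq_add_smul a b)) hzU hstep hr
end

section
/- Let A ∈ ℝ^{d×d} be invertible, b ∈ ℝ^d, let s_i : ℝ → ℝ be C² diffeomorphisms for i = 1,…,d, and define q(x) = A s(x) + b with s(x) = (s₁(x₁), …, s_d(x_d)), so J_q(x) = A D(x) with D(x) = diag(s₁′(x₁), …, s_d′(x_d)). Let r_i : ℝ → ℝ be twice differentiable with r_i″(t) = ( s_i′(s_i⁻¹(t)) )^{−2}, and define R(z) = Σ_{i=1}^d r_i( (A⁻¹(z − b))_i ). Then for every x in the domain of q, with z = q(x), the Hessian compatibility holds: ∇²R(z) = [ J_q(x) J_q(x)ᵀ ]⁻¹ = A^{−⊤} D(x)^{−2} A⁻¹. -/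
/-!
Write `q = (z ↦ A z + b) ∘ s` and `R = ρ ∘ (z ↦ A⁻¹ (z - b))` with `ρ u = ∑ᵢ rᵢ(uᵢ)` separable.
The chain rule gives `J_q(x) = A D(x)`, and, since the gradient pulls back along the adjoint,
`∇²R(z) = A⁻ᵀ diag(rᵢ''(uᵢ)) A⁻¹` with `u = A⁻¹ (z - b)`. At `z = q x` we have `u = s(x)`, so
`rᵢ''(uᵢ) = sᵢ'(xᵢ)⁻²`; and `A⁻ᵀ D⁻² A⁻¹` is the inverse of `(A D)(A D)ᵀ = A D² Aᵀ`.
-/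

open scoped RealInnerProductSpace Matrix
open Matrix WithLp

section

variable {ι : Type*} [Fintype ι] [DecidableEq ι]

theorem Matrix.inv_diagonal_of_ne_zero {K : Type*} [Field K] {v : ι → K} (hv : ∀ i, v i ≠ 0) :
    (diagonal v)⁻¹ = diagonal fun i => (v i)⁻¹ := by
  refine inv_eq_left_inv ?_
  rw [diagonal_mul_diagonal, ← diagonal_one]
  exact congrArg diagonal (funext fun i => inv_mul_cancel₀ (hv i))

theorem Matrix.inv_mul_mul_transpose {K : Type*} [Field K] (A D : Matrix ι ι K) (hD : Dᵀ = D) :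
    ((A * D) * (A * D)ᵀ)⁻¹ = A⁻¹ᵀ * (D ^ 2)⁻¹ * A⁻¹ := by
  rw [transpose_mul, hD, sq, transpose_nonsing_inv, Matrix.mul_assoc, ← Matrix.mul_assoc D,
    Matrix.mul_inv_rev, Matrix.mul_inv_rev, Matrix.mul_assoc]

theorem Matrix.adjoint_toEuclideanCLM (M : Matrix ι ι ℝ) :
    (toEuclideanCLM (𝕜 := ℝ) M).adjoint = toEuclideanCLM (𝕜 := ℝ) Mᵀ := by
  rw [← conjTranspose_eq_transpose_of_trivial, ← star_eq_conjTranspose, map_star,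
    ContinuousLinearMap.star_eq_adjoint]

theorem hasFDerivAt_euclidean_piMap {f f' : ι → ℝ → ℝ} {x : EuclideanSpace ℝ ι}
    (hf : ∀ i, HasDerivAt (f i) (f' i (x i)) (x i)) :
    HasFDerivAt (fun y : EuclideanSpace ℝ ι => toLp 2 fun i => f i (y i))
      (toEuclideanCLM (𝕜 := ℝ) (diagonal fun i => f' i (x i))) x := by
  rw [← hasFDerivWithinAt_univ, hasFDerivWithinAt_piLp]
  intro i
  rw [hasFDerivWithinAt_univ]
  refine ((hf i).comp_hasFDerivAt x (PiLp.hasFDerivAt_apply 2 x i)).congr_fderiv ?_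
  ext v
  simp [mulVec_diagonal]

theorem hasFDerivAt_toEuclideanCLM_piMap_add {s s' : ι → ℝ → ℝ} (A : Matrix ι ι ℝ)
    (b x : EuclideanSpace ℝ ι) (hs : ∀ i, HasDerivAt (s i) (s' i (x i)) (x i)) :
    HasFDerivAt
      (fun y : EuclideanSpace ℝ ι => toEuclideanCLM (𝕜 := ℝ) A (toLp 2 fun i => s i (y i)) + b)
      (toEuclideanCLM (𝕜 := ℝ) (A * diagonal fun i => s' i (x i))) x := by
  rw [map_mul]
  exact ((toEuclideanCLM (𝕜 := ℝ) A).hasFDerivAt.comp x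
    (hasFDerivAt_euclidean_piMap hs)).add_const b

end

theorem hasGradientAt_euclidean_sum_apply {ι : Type*} [Fintype ι] {r r' : ι → ℝ → ℝ}
    {u : EuclideanSpace ℝ ι} (hr : ∀ i, HasDerivAt (r i) (r' i (u i)) (u i)) :
    HasGradientAt (fun v : EuclideanSpace ℝ ι => ∑ i, r i (v i))
      (toLp 2 fun i => r' i (u i)) u := by
  rw [hasGradientAt_iff_hasFDerivAt]
  refine (HasFDerivAt.fun_sum fun i _ =>
    (hr i).comp_hasFDerivAt u (PiLp.hasFDerivAt_apply 2 u i)).congr_fderiv ?_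
  ext v
  simp [PiLp.inner_apply, mul_comm]

theorem HasGradientAt.comp_clm_sub {F G : Type*} [NormedAddCommGroup F] [InnerProductSpace ℝ F]
    [CompleteSpace F] [NormedAddCommGroup G] [InnerProductSpace ℝ G] [CompleteSpace G]
    {f : G → ℝ} {g : G} (L : F →L[ℝ] G) (b x : F) (h : HasGradientAt f g (L (x - b))) :
    HasGradientAt (fun y => f (L (y - b))) (L.adjoint g) x := by
  rw [hasGradientAt_iff_hasFDerivAt] at h ⊢
  refine (h.comp x (L.hasFDerivAt.comp x (hasFDerivAt_sub_const b))).congr_fderiv ?_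
  ext v
  simp [ContinuousLinearMap.adjoint_inner_left]

theorem hasFDerivAt_gradient_sum_apply_affine {ι : Type*} [Fintype ι] [DecidableEq ι]
    {r r' r'' : ι → ℝ → ℝ} (M : Matrix ι ι ℝ) (b z : EuclideanSpace ℝ ι)
    (hr' : ∀ i t, HasDerivAt (r i) (r' i t) t)
    (hr'' : ∀ i, HasDerivAt (r' i) (r'' i (toEuclideanCLM (𝕜 := ℝ) M (z - b) i))
      (toEuclideanCLM (𝕜 := ℝ) M (z - b) i)) :
    HasFDerivAt (gradient fun y => ∑ i, r i (toEuclideanCLM (𝕜 := ℝ) M (y - b) i))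
      (toEuclideanCLM (𝕜 := ℝ)
        (Mᵀ * diagonal (fun i => r'' i (toEuclideanCLM (𝕜 := ℝ) M (z - b) i)) * M)) z := by
  have hgrad : (gradient fun y => ∑ i, r i (toEuclideanCLM (𝕜 := ℝ) M (y - b) i)) =
      fun y => toEuclideanCLM (𝕜 := ℝ) Mᵀ
        (toLp 2 fun i => r' i (toEuclideanCLM (𝕜 := ℝ) M (y - b) i)) := by
    refine gradient_eq fun y => ?_
    rw [← adjoint_toEuclideanCLM]
    exact (hasGradientAt_euclidean_sum_apply fun i => hr' i _).comp_clm_sub _ b y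
  have hL : HasFDerivAt (fun y => toEuclideanCLM (𝕜 := ℝ) M (y - b))
      (toEuclideanCLM (𝕜 := ℝ) M) z :=
    ((toEuclideanCLM (𝕜 := ℝ) M).hasFDerivAt.comp z (hasFDerivAt_sub_const b)).congr_fderiv
      (ContinuousLinearMap.comp_id _)
  rw [hgrad, Matrix.mul_assoc, map_mul, map_mul, ContinuousLinearMap.mul_def,
    ContinuousLinearMap.mul_def]
  exact (toEuclideanCLM (𝕜 := ℝ) Mᵀ).hasFDerivAt.comp z
    ((hasFDerivAt_euclidean_piMap hr'').comp z hL)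

theorem affine_mixing_hessian_compatibility_general
    {d : ℕ}
    (A : Matrix (Fin d) (Fin d) ℝ) (hA : IsUnit A.det)
    (b : EuclideanSpace ℝ (Fin d))
    (s s' : Fin d → ℝ → ℝ)
    (hs' : ∀ i x, HasDerivAt (s i) (s' i x) x) (hs'ne : ∀ i x, s' i x ≠ 0)
    (sinv : Fin d → ℝ → ℝ)
    (hsinv : ∀ i, Function.LeftInverse (sinv i) (s i) ∧ Function.RightInverse (sinv i) (s i))
    (r r' : Fin d → ℝ → ℝ)
    (hr' : ∀ i t, HasDerivAt (r i) (r' i t) t)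
    (hr'' : ∀ i t, HasDerivAt (r' i) (((s' i (sinv i t)) ^ 2)⁻¹) t)
    (q : EuclideanSpace ℝ (Fin d) → EuclideanSpace ℝ (Fin d))
    (hq : ∀ x, ∀ j, q x j = (∑ i, A j i * s i (x i)) + b j)
    (R : EuclideanSpace ℝ (Fin d) → ℝ)
    (hR : ∀ z, R z = ∑ i, r i (∑ j, A⁻¹ i j * (z j - b j))) :
    ∀ x : EuclideanSpace ℝ (Fin d),
      HasFDerivAt q (LinearMap.toContinuousLinearMap
        (Matrix.toEuclideanLin (A * Matrix.diagonal fun i => s' i (x i)))) x ∧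
      HasFDerivAt (gradient R) (LinearMap.toContinuousLinearMap
        (Matrix.toEuclideanLin
          ((A⁻¹)ᵀ * ((Matrix.diagonal fun i => s' i (x i)) ^ 2)⁻¹ * A⁻¹))) (q x) ∧
      ((A⁻¹)ᵀ * ((Matrix.diagonal fun i => s' i (x i)) ^ 2)⁻¹ * A⁻¹)
          * ((A * Matrix.diagonal fun i => s' i (x i))
            * (A * Matrix.diagonal fun i => s' i (x i))ᵀ) = 1 ∧
      ((A * Matrix.diagonal fun i => s' i (x i))
            * (A * Matrix.diagonal fun i => s' i (x i))ᵀ)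
          * ((A⁻¹)ᵀ * ((Matrix.diagonal fun i => s' i (x i)) ^ 2)⁻¹ * A⁻¹) = 1 := by
  intro x
  set D := diagonal fun i => s' i (x i)
  have hq_eq : q = fun y => toEuclideanCLM (𝕜 := ℝ) A (toLp 2 fun i => s i (y i)) + b := by
    funext y
    ext j
    simp [hq, mulVec, dotProduct]
  have hR_eq : R = fun z => ∑ i, r i (toEuclideanCLM (𝕜 := ℝ) A⁻¹ (z - b) i) := by
    funext z
    simp [hR, mulVec, dotProduct, mul_sub]
  have hqx : toEuclideanCLM (𝕜 := ℝ) A⁻¹ (q x - b) = toLp 2 fun i => s i (x i) := by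
    ext i
    simp [hq_eq, mulVec_mulVec, nonsing_inv_mul A hA]
  have hD2 : (D ^ 2)⁻¹ = diagonal fun i => (s' i (x i) ^ 2)⁻¹ := by
    rw [diagonal_pow]
    exact inv_diagonal_of_ne_zero fun i => pow_ne_zero 2 (hs'ne i (x i))
  have hD : IsUnit D.det := by
    rw [det_diagonal]
    exact isUnit_iff_ne_zero.2 (Finset.prod_ne_zero_iff.2 fun i _ => hs'ne i (x i))
  have hJ : IsUnit ((A * D) * (A * D)ᵀ).det := by
    rw [det_mul, det_transpose, det_mul]
    exact (hA.mul hD).mul (hA.mul hD)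
  rw [← inv_mul_mul_transpose A D (diagonal_transpose _)]
  refine ⟨?_, ?_, nonsing_inv_mul _ hJ, mul_nonsing_inv _ hJ⟩
  · rw [hq_eq]
    exact hasFDerivAt_toEuclideanCLM_piMap_add A b x fun i => hs' i (x i)
  · have hHess := hasFDerivAt_gradient_sum_apply_affine (r'' := fun i t => (s' i (sinv i t) ^ 2)⁻¹)
      A⁻¹ b (q x) hr' fun i => hr'' i _
    rw [hqx] at hHess
    simp only [(hsinv _).1 _] at hHess
    rw [inv_mul_mul_transpose A D (diagonal_transpose _), hD2, hR_eq]
    exact hHess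

/-- affine mixing of a separable reparameterization: for
`q(x) = A s(x) + b` with `A` invertible and `s` coordinatewise `C²` diffeomorphisms, and
`R(z) = Σᵢ rᵢ((A⁻¹(z-b))ᵢ)` with `rᵢ'' (t) = (sᵢ'(sᵢ⁻¹(t)))⁻²`, the Jacobian is
`J_q(x) = A D(x)` and Hessian compatibility `∇²R(q x) = A⁻ᵀ D(x)⁻² A⁻¹ = [J_q J_qᵀ]⁻¹` holds. -/
theorem affine_mixing_hessian_compatibility
    {d : ℕ}
    (A : Matrix (Fin d) (Fin d) ℝ) (hA : IsUnit A.det)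
    (b : EuclideanSpace ℝ (Fin d))
    (s s' : Fin d → ℝ → ℝ)
    (hsC2 : ∀ i, ContDiff ℝ 2 (s i)) (hsbij : ∀ i, Function.Bijective (s i))
    (hs' : ∀ i x, HasDerivAt (s i) (s' i x) x) (hs'ne : ∀ i x, s' i x ≠ 0)
    (sinv : Fin d → ℝ → ℝ)
    (hsinv : ∀ i, Function.LeftInverse (sinv i) (s i) ∧ Function.RightInverse (sinv i) (s i))
    (r r' : Fin d → ℝ → ℝ)
    (hr' : ∀ i t, HasDerivAt (r i) (r' i t) t)
    (hr'' : ∀ i t, HasDerivAt (r' i) (((s' i (sinv i t)) ^ 2)⁻¹) t)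
    (q : EuclideanSpace ℝ (Fin d) → EuclideanSpace ℝ (Fin d))
    (hq : ∀ x, ∀ j, q x j = (∑ i, A j i * s i (x i)) + b j)
    (R : EuclideanSpace ℝ (Fin d) → ℝ)
    (hR : ∀ z, R z = ∑ i, r i (∑ j, A⁻¹ i j * (z j - b j))) :
    ∀ x : EuclideanSpace ℝ (Fin d),
      HasFDerivAt q (LinearMap.toContinuousLinearMap
        (Matrix.toEuclideanLin (A * Matrix.diagonal fun i => s' i (x i)))) x ∧
      HasFDerivAt (gradient R) (LinearMap.toContinuousLinearMap
        (Matrix.toEuclideanLin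
          ((A⁻¹)ᵀ * ((Matrix.diagonal fun i => s' i (x i)) ^ 2)⁻¹ * A⁻¹))) (q x) ∧
      ((A⁻¹)ᵀ * ((Matrix.diagonal fun i => s' i (x i)) ^ 2)⁻¹ * A⁻¹)
          * ((A * Matrix.diagonal fun i => s' i (x i))
            * (A * Matrix.diagonal fun i => s' i (x i))ᵀ) = 1 ∧
      ((A * Matrix.diagonal fun i => s' i (x i))
            * (A * Matrix.diagonal fun i => s' i (x i))ᵀ)
          * ((A⁻¹)ᵀ * ((Matrix.diagonal fun i => s' i (x i)) ^ 2)⁻¹ * A⁻¹) = 1 :=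
  affine_mixing_hessian_compatibility_general A hA b s s' hs' hs'ne sinv hsinv r r' hr' hr'' q hq R
    hR
end

section
/- Let a ∈ ℝ^d \ {0} with s = ‖a‖², let h : ℝ → ℝ be C², and define q(x) = x + h(aᵀx) a, so J_q(x) = I + h′(aᵀx) a aᵀ. Assume 1 + s h′(r) ≠ 0 on the domain and that g(r) = r + s h(r) is invertible on the relevant interval, and define β(t) = ( (1 + s h′(g⁻¹(t)))^{−2} − 1 ) / s. Let ψ : ℝ → ℝ satisfy ψ″(t) = β(t) and set R(z) = (1/2)‖z‖² + ψ(aᵀz). Then for every x in the domain, with z = q(x), the Hessian compatibility holds: ∇²R(z) = I + β(aᵀz) a aᵀ = [ J_q(x) J_q(x)ᵀ ]⁻¹. -/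
/-!
Every operator in sight is a rank-one perturbation `I + c a aᵀ` of the identity, and these compose
by `(I + b a aᵀ)(I + c a aᵀ) = I + (b + c + b c s) a aᵀ`, i.e. the multipliers `1 + c s` multiply.
For `J_q(x) J_q(x)ᵀ` the multiplier is `(1 + s h'(r))²` with `r = aᵀx`, while `β` is chosen so that
`1 + s β(g r) = (1 + s h'(r))⁻²`; since `aᵀ q(x) = g(r)`, the Hessian of `R` at `q(x)` (the derivative
of `∇R(z) = z + ψ'(aᵀz) a`) is the inverse of `J_q(x) J_q(x)ᵀ`.
-/

open scoped RealInnerProductSpace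
open InnerProductSpace

section RankOnePerturbation

variable {E : Type*} [NormedAddCommGroup E] [InnerProductSpace ℝ E]

theorem id_add_smul_rankOne_comp (a : E) (b c : ℝ) :
    (ContinuousLinearMap.id ℝ E + b • rankOne ℝ a a).comp
        (ContinuousLinearMap.id ℝ E + c • rankOne ℝ a a)
      = ContinuousLinearMap.id ℝ E + (b + c + b * c * ‖a‖ ^ 2) • rankOne ℝ a a := by
  ext v
  simp only [ContinuousLinearMap.comp_apply, add_apply, smul_apply,
    ContinuousLinearMap.id_apply, rankOne_apply, inner_add_right, real_inner_smul_right,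
    real_inner_self_eq_norm_sq, smul_smul]
  module

theorem id_add_smul_rankOne_comp_eq_id {a : E} {b c : ℝ}
    (hbc : (1 + b * ‖a‖ ^ 2) * (1 + c * ‖a‖ ^ 2) = 1) :
    (ContinuousLinearMap.id ℝ E + b • rankOne ℝ a a).comp
        (ContinuousLinearMap.id ℝ E + c • rankOne ℝ a a) = ContinuousLinearMap.id ℝ E := by
  rw [id_add_smul_rankOne_comp]
  rcases eq_or_ne a 0 with rfl | ha
  · simp
  have hs : ‖a‖ ^ 2 ≠ 0 := by positivity
  have hcoeff : b + c + b * c * ‖a‖ ^ 2 = 0 := by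
    apply mul_right_cancel₀ hs
    linear_combination hbc
  simp [hcoeff]

theorem adjoint_id_add_smul_rankOne [CompleteSpace E] (a : E) (c : ℝ) :
    ContinuousLinearMap.adjoint (ContinuousLinearMap.id ℝ E + c • rankOne ℝ a a)
      = ContinuousLinearMap.id ℝ E + c • rankOne ℝ a a := by
  simp [ContinuousLinearMap.adjoint_id]

theorem hasFDerivAt_add_comp_inner_smul {f : ℝ → ℝ} {f' : ℝ} (a x : E)
    (hf : HasDerivAt f f' ⟪a, x⟫) :
    HasFDerivAt (fun y ↦ y + f ⟪a, y⟫ • a) (ContinuousLinearMap.id ℝ E + f' • rankOne ℝ a a) x := by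
  refine ((hasFDerivAt_id x).add
    ((hf.comp_hasFDerivAt x (innerSL ℝ a).hasFDerivAt).smul_const a)).congr_fderiv ?_
  ext v
  simp [smul_smul]

theorem hasGradientAt_half_norm_sq_add_comp_inner [CompleteSpace E] {ψ : ℝ → ℝ} {ψ' : ℝ}
    (a z : E) (hψ : HasDerivAt ψ ψ' ⟪a, z⟫) :
    HasGradientAt (fun w ↦ 1 / 2 * ‖w‖ ^ 2 + ψ ⟪a, w⟫) (z + ψ' • a) z := by
  rw [hasGradientAt_iff_hasFDerivAt]
  refine (((hasFDerivAt_id z).norm_sq.const_mul (1 / 2)).add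
    (hψ.comp_hasFDerivAt z (innerSL ℝ a).hasFDerivAt)).congr_fderiv ?_
  ext v
  simp

end RankOnePerturbation

theorem one_add_inv_sq_sub_one_div_mul_mul_one_add_eq_one {s c : ℝ} (hc : 1 + s * c ≠ 0) :
    (1 + (((1 + s * c) ^ 2)⁻¹ - 1) / s * s) * (1 + (c + c + c * c * s) * s) = 1 := by
  rw [div_mul_cancel_of_imp (fun hs ↦ by simp [hs])]
  field_simp
  ring

theorem rank_one_mixing_hessian_compatibility_general
    {d : ℕ}
    (a : EuclideanSpace ℝ (Fin d))
    (h h' : ℝ → ℝ) (hh' : ∀ t, HasDerivAt h (h' t) t)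
    (hne : ∀ t : ℝ, 1 + ‖a‖ ^ 2 * h' t ≠ 0)
    (g : ℝ → ℝ) (hg : ∀ t, g t = t + ‖a‖ ^ 2 * h t)
    (ginv : ℝ → ℝ)
    (hginv : Function.LeftInverse ginv g ∧ Function.RightInverse ginv g)
    (β : ℝ → ℝ)
    (hβ : ∀ t, β t = (((1 + ‖a‖ ^ 2 * h' (ginv t)) ^ 2)⁻¹ - 1) / ‖a‖ ^ 2)
    (ψ ψ' : ℝ → ℝ)
    (hψ' : ∀ t, HasDerivAt ψ (ψ' t) t) (hψ'' : ∀ t, HasDerivAt ψ' (β t) t)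
    (q : EuclideanSpace ℝ (Fin d) → EuclideanSpace ℝ (Fin d))
    (hq : ∀ x, q x = x + h ⟪a, x⟫ • a)
    (R : EuclideanSpace ℝ (Fin d) → ℝ)
    (hR : ∀ z, R z = (1 / 2) * ‖z‖ ^ 2 + ψ ⟪a, z⟫) :
    ∀ x : EuclideanSpace ℝ (Fin d),
      HasFDerivAt q
        (ContinuousLinearMap.id ℝ _ + h' ⟪a, x⟫ • (innerSL ℝ a).smulRight a) x ∧
      HasFDerivAt (gradient R)
        (ContinuousLinearMap.id ℝ _ + β ⟪a, q x⟫ • (innerSL ℝ a).smulRight a) (q x) ∧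
      (ContinuousLinearMap.id ℝ _ + β ⟪a, q x⟫ • (innerSL ℝ a).smulRight a).comp
          ((ContinuousLinearMap.id ℝ _ + h' ⟪a, x⟫ • (innerSL ℝ a).smulRight a).comp
            (ContinuousLinearMap.adjoint
              (ContinuousLinearMap.id ℝ _ + h' ⟪a, x⟫ • (innerSL ℝ a).smulRight a)))
        = ContinuousLinearMap.id ℝ _ ∧
      ((ContinuousLinearMap.id ℝ _ + h' ⟪a, x⟫ • (innerSL ℝ a).smulRight a).comp
          (ContinuousLinearMap.adjoint
            (ContinuousLinearMap.id ℝ _ + h' ⟪a, x⟫ • (innerSL ℝ a).smulRight a))).comp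
          (ContinuousLinearMap.id ℝ _ + β ⟪a, q x⟫ • (innerSL ℝ a).smulRight a)
        = ContinuousLinearMap.id ℝ _ := by
  intro x
  simp only [← rankOne_def]
  have hq_deriv : HasFDerivAt q (ContinuousLinearMap.id ℝ _ + h' ⟪a, x⟫ • rankOne ℝ a a) x :=
    funext hq ▸ hasFDerivAt_add_comp_inner_smul a x (hh' ⟪a, x⟫)
  have hgradR : gradient R = fun z ↦ z + ψ' ⟪a, z⟫ • a := funext fun z ↦
    (funext hR ▸ hasGradientAt_half_norm_sq_add_comp_inner a z (hψ' ⟪a, z⟫)).gradient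
  have hgradR_deriv := hgradR ▸ hasFDerivAt_add_comp_inner_smul a (q x) (hψ'' ⟪a, q x⟫)
  have hqa : ⟪a, q x⟫ = g ⟪a, x⟫ := by
    rw [hq, hg, inner_add_right, real_inner_smul_right, real_inner_self_eq_norm_sq]
    ring
  have hβx : β ⟪a, q x⟫ = (((1 + ‖a‖ ^ 2 * h' ⟪a, x⟫) ^ 2)⁻¹ - 1) / ‖a‖ ^ 2 := by
    rw [hβ, hqa, hginv.1]
  have hinv := one_add_inv_sq_sub_one_div_mul_mul_one_add_eq_one (hne ⟪a, x⟫)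
  rw [adjoint_id_add_smul_rankOne, id_add_smul_rankOne_comp, hβx]
  exact ⟨hq_deriv, hβx ▸ hgradR_deriv, id_add_smul_rankOne_comp_eq_id hinv,
    id_add_smul_rankOne_comp_eq_id (by rwa [mul_comm] at hinv)⟩

/-- rank-one nonlinear mixing: for `q(x) = x + h(aᵀx) a`, with
`β(t) = ((1 + s h'(g⁻¹(t)))⁻² - 1)/s`, `s = ‖a‖²`, `g(r) = r + s h(r)`, and
`R(z) = ½‖z‖² + ψ(aᵀz)` where `ψ'' = β`, the Jacobian is `J_q(x) = I + h'(aᵀx) a aᵀ` and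
Hessian compatibility `∇²R(q x) = I + β(aᵀ q x) a aᵀ = [J_q(x) J_q(x)ᵀ]⁻¹` holds. -/
theorem rank_one_mixing_hessian_compatibility
    {d : ℕ}
    (a : EuclideanSpace ℝ (Fin d)) (ha : a ≠ 0)
    (h h' : ℝ → ℝ) (hC2 : ContDiff ℝ 2 h) (hh' : ∀ t, HasDerivAt h (h' t) t)
    (hne : ∀ t : ℝ, 1 + ‖a‖ ^ 2 * h' t ≠ 0)
    (g : ℝ → ℝ) (hg : ∀ t, g t = t + ‖a‖ ^ 2 * h t)
    (ginv : ℝ → ℝ)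
    (hginv : Function.LeftInverse ginv g ∧ Function.RightInverse ginv g)
    (β : ℝ → ℝ)
    (hβ : ∀ t, β t = (((1 + ‖a‖ ^ 2 * h' (ginv t)) ^ 2)⁻¹ - 1) / ‖a‖ ^ 2)
    (ψ ψ' : ℝ → ℝ)
    (hψ' : ∀ t, HasDerivAt ψ (ψ' t) t) (hψ'' : ∀ t, HasDerivAt ψ' (β t) t)
    (q : EuclideanSpace ℝ (Fin d) → EuclideanSpace ℝ (Fin d))
    (hq : ∀ x, q x = x + h ⟪a, x⟫ • a)
    (R : EuclideanSpace ℝ (Fin d) → ℝ)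
    (hR : ∀ z, R z = (1 / 2) * ‖z‖ ^ 2 + ψ ⟪a, z⟫) :
    ∀ x : EuclideanSpace ℝ (Fin d),
      HasFDerivAt q
        (ContinuousLinearMap.id ℝ _ + h' ⟪a, x⟫ • (innerSL ℝ a).smulRight a) x ∧
      HasFDerivAt (gradient R)
        (ContinuousLinearMap.id ℝ _ + β ⟪a, q x⟫ • (innerSL ℝ a).smulRight a) (q x) ∧
      (ContinuousLinearMap.id ℝ _ + β ⟪a, q x⟫ • (innerSL ℝ a).smulRight a).comp
          ((ContinuousLinearMap.id ℝ _ + h' ⟪a, x⟫ • (innerSL ℝ a).smulRight a).comp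
            (ContinuousLinearMap.adjoint
              (ContinuousLinearMap.id ℝ _ + h' ⟪a, x⟫ • (innerSL ℝ a).smulRight a)))
        = ContinuousLinearMap.id ℝ _ ∧
      ((ContinuousLinearMap.id ℝ _ + h' ⟪a, x⟫ • (innerSL ℝ a).smulRight a).comp
          (ContinuousLinearMap.adjoint
            (ContinuousLinearMap.id ℝ _ + h' ⟪a, x⟫ • (innerSL ℝ a).smulRight a))).comp
          (ContinuousLinearMap.id ℝ _ + β ⟪a, q x⟫ • (innerSL ℝ a).smulRight a)
        = ContinuousLinearMap.id ℝ _ :=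
  rank_one_mixing_hessian_compatibility_general a h h' hh' hne g hg ginv hginv β hβ ψ ψ' hψ' hψ'' q
    hq R hR
end
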